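/- arXiv:2402.15166 — 8 statements merged into one kernel-verified Lean document; each statement's English description precedes it below -/
import Mathlib

section
/- Perturbed strong convexity (Lemma B.1). Let E be a real inner product space and h : E → ℝ differentiable. Assume 0 ≤ μ ≤ S, that h(b) ≤ h(a) + ⟨∇h(a), b − a⟩ + (S/2)‖b − a‖² for all a, b ∈ E (S-smoothness), and that h(b) ≥ h(a) + ⟨∇h(a), b − a⟩ + (μ/2)‖b − a‖² for all a, b ∈ E (μ-strong convexity). Then for all x, y, z ∈ E: ⟨∇h(x), z − y⟩ ≥ h(z) − h(y) + (μ/4)‖y − z‖² − S‖z − x‖². -/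
open scoped RealInnerProductSpace

/-- Perturbed strong convexity (Lemma B.1). -/
theorem stmt_2 {E : Type*} [NormedAddCommGroup E] [InnerProductSpace ℝ E] [CompleteSpace E]
    (h : E → ℝ) (μ S : ℝ) (hμ : 0 ≤ μ) (hμS : μ ≤ S)
    (hdiff : Differentiable ℝ h)
    (hsmooth : ∀ a b : E, h b ≤ h a + ⟪gradient h a, b - a⟫ + S / 2 * ‖b - a‖ ^ 2)
    (hsc : ∀ a b : E, h b ≥ h a + ⟪gradient h a, b - a⟫ + μ / 2 * ‖b - a‖ ^ 2)
    (x y z : E) :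
    ⟪gradient h x, z - y⟫ ≥ h z - h y + μ / 4 * ‖y - z‖ ^ 2 - S * ‖z - x‖ ^ 2 := by
  have h1 := hsc x y
  have h2 := hsmooth x z
  have hin : ⟪gradient h x, z - y⟫ = ⟪gradient h x, z - x⟫ - ⟪gradient h x, y - x⟫ := by
    rw [← inner_sub_right]; congr 1; abel
  have htri : ‖y - z‖ ≤ ‖y - x‖ + ‖x - z‖ := norm_sub_le_norm_sub_add_norm_sub y x z
  have hrev : ‖x - z‖ = ‖z - x‖ := norm_sub_rev x z
  have h0 : (0:ℝ) ≤ ‖y - z‖ := norm_nonneg _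
  have h0' : (0:ℝ) ≤ ‖y - x‖ := norm_nonneg _
  have h0'' : (0:ℝ) ≤ ‖z - x‖ := norm_nonneg _
  nlinarith [sq_nonneg (‖y - x‖ - ‖z - x‖), sq_nonneg ‖z - x‖, mul_le_mul_of_nonneg_left (sq_le_sq' (by nlinarith) (by nlinarith : ‖y - z‖ ≤ ‖y - x‖ + ‖z - x‖)) hμ]
end

section
/- Single-step SGD recursion (established in the proof of Lemma B.3). Let E be a real Hilbert space and F : E → ℝ differentiable with S-Lipschitz gradient, where S > 0. Let τ ≥ 1 be an integer and 0 ≤ η ≤ 1/(√6·S·τ). Let x, y ∈ E and let g be an E-valued random variable on a probability space with 𝔼[g] = ∇F(x) and 𝔼[‖g − ∇F(x)‖²] ≤ σ². If moreover ‖∇F(y)‖² ≤ σ² + G², then 𝔼[‖(x − η·g) − y‖²] ≤ (1 + 2/τ)·‖x − y‖² + 6τη²·(2σ² + G²). -/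
/-!
Since `𝔼 g = ∇F(x)`, the bias-variance identity gives
`𝔼‖(x - y) - η g‖² = ‖(x - y) - η ∇F(x)‖² + η² 𝔼‖g - ∇F(x)‖²`, so the noise costs at most `η²σ²`.
In the deterministic part, `∇F(x)` is compared with `∇F(y)` through the `S`-Lipschitz bound; the
cross term with `∇F(y)` is split by AM-GM with weight `τ`, and the step-size condition
`6 (η S τ)² ≤ 1` absorbs every remaining multiple of `‖x - y‖²` into `(2 / τ) ‖x - y‖²`.
-/

open MeasureTheory
open scoped RealInnerProductSpace

section BiasVariance

variable {E : Type*} [NormedAddCommGroup E] [InnerProductSpace ℝ E] [CompleteSpace E]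
  {Ω : Type*} [MeasurableSpace Ω] {μ : Measure Ω} [IsProbabilityMeasure μ]

theorem integral_norm_sq_eq_add_integral_norm_sub_sq {h : Ω → E} (hh : MemLp h 2 μ) :
    ∫ ω, ‖h ω‖ ^ 2 ∂μ = ‖∫ ω, h ω ∂μ‖ ^ 2 + ∫ ω, ‖h ω - ∫ ω', h ω' ∂μ‖ ^ 2 ∂μ := by
  set m := ∫ ω, h ω ∂μ
  have hsq : Integrable (fun ω => ‖h ω‖ ^ 2) μ := hh.integrable_norm_pow two_ne_zero
  have hinner : Integrable (fun ω => 2 * ⟪h ω, m⟫) μ :=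
    ((hh.integrable one_le_two).inner_const m).const_mul 2
  have hsub : Integrable (fun ω => ‖h ω‖ ^ 2 - 2 * ⟪h ω, m⟫) μ := hsq.sub hinner
  have hexpand : ∫ ω, ‖h ω - m‖ ^ 2 ∂μ = ∫ ω, ‖h ω‖ ^ 2 ∂μ - ‖m‖ ^ 2 := by
    simp_rw [norm_sub_sq_real]
    rw [integral_add hsub (integrable_const _), integral_sub hsq hinner, integral_const_mul]
    simp_rw [real_inner_comm m]
    rw [integral_inner (hh.integrable one_le_two), real_inner_self_eq_norm_sq, integral_const,
      probReal_univ, one_smul]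
    ring
  linarith

theorem integral_norm_sub_smul_sq {g : Ω → E} (hg : MemLp g 2 μ) (c : E) (η : ℝ) :
    ∫ ω, ‖c - η • g ω‖ ^ 2 ∂μ
      = ‖c - η • ∫ ω, g ω ∂μ‖ ^ 2 + η ^ 2 * ∫ ω, ‖g ω - ∫ ω', g ω' ∂μ‖ ^ 2 ∂μ := by
  have hh : MemLp (fun ω => c - η • g ω) 2 μ := (memLp_const c).sub (hg.const_smul η)
  have hsmul : Integrable (fun ω => η • g ω) μ := (hg.integrable one_le_two).smul η
  have hmean : ∫ ω, (c - η • g ω) ∂μ = c - η • ∫ ω, g ω ∂μ := by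
    rw [integral_sub (integrable_const c) hsmul, integral_const, integral_smul, probReal_univ,
      one_smul]
  have hdev (ω : Ω) : ‖(c - η • g ω) - (c - η • ∫ ω', g ω' ∂μ)‖ ^ 2
      = η ^ 2 * ‖g ω - ∫ ω', g ω' ∂μ‖ ^ 2 := by
    rw [sub_sub_sub_cancel_left, ← smul_sub, norm_sub_rev, norm_smul, mul_pow, Real.norm_eq_abs,
      sq_abs]
  rw [integral_norm_sq_eq_add_integral_norm_sub_sq hh, hmean]
  simp_rw [hdev]
  rw [integral_const_mul]

end BiasVariance

theorem norm_sub_smul_sq_le {E : Type*} [NormedAddCommGroup E] [InnerProductSpace ℝ E]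
    {u a b : E} {η S : ℝ} (hη : 0 ≤ η) (hab : ‖a - b‖ ≤ S * ‖u‖) :
    ‖u - η • a‖ ^ 2 ≤
      (1 + 2 * η * S + 2 * η ^ 2 * S ^ 2) * ‖u‖ ^ 2 + 2 * η * ‖u‖ * ‖b‖ + 2 * η ^ 2 * ‖b‖ ^ 2 := by
  have hinner : -(S * ‖u‖ ^ 2 + ‖u‖ * ‖b‖) ≤ ⟪u, a⟫ := by
    have h₁ := neg_le_of_abs_le (abs_real_inner_le_norm u (a - b))
    have h₂ := neg_le_of_abs_le (abs_real_inner_le_norm u b)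
    rw [inner_sub_right] at h₁
    nlinarith [norm_nonneg u]
  have hnorm : ‖a‖ ^ 2 ≤ 2 * S ^ 2 * ‖u‖ ^ 2 + 2 * ‖b‖ ^ 2 := by
    have h : ‖a‖ ≤ S * ‖u‖ + ‖b‖ := (norm_le_norm_sub_add a b).trans (by linarith)
    nlinarith [norm_nonneg a, sq_nonneg (S * ‖u‖ - ‖b‖)]
  rw [norm_sub_sq_real, real_inner_smul_right, norm_smul, mul_pow, Real.norm_eq_abs, sq_abs]
  nlinarith [mul_le_mul_of_nonneg_left hinner hη, mul_le_mul_of_nonneg_left hnorm (sq_nonneg η)]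

theorem sgd_step_scalar_bound {t η S A B σ G : ℝ} (ht : 1 ≤ t)
    (hstep : 6 * (η * S * t) ^ 2 ≤ 1) (hB : B ^ 2 ≤ σ ^ 2 + G ^ 2) :
    (1 + 2 * η * S + 2 * η ^ 2 * S ^ 2) * A ^ 2 + 2 * η * A * B + 2 * η ^ 2 * B ^ 2
        + η ^ 2 * σ ^ 2 ≤
      (1 + 2 / t) * A ^ 2 + 6 * t * η ^ 2 * (2 * σ ^ 2 + G ^ 2) := by
  have ht0 : 0 < t := one_pos.trans_le ht
  have hp : 2 * (η * S) * t ≤ 1 := by nlinarith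
  have hp2 : 2 * (η * S) ^ 2 * t ≤ 1 / 3 := by nlinarith [sq_nonneg (η * S)]
  have hAB : 2 * η * A * B * t ≤ A ^ 2 / 2 + 2 * t ^ 2 * η ^ 2 * B ^ 2 := by
    nlinarith [sq_nonneg (A - 2 * t * η * B)]
  have hnoise : 2 * t ^ 2 * η ^ 2 * B ^ 2 + 2 * t * η ^ 2 * B ^ 2 + t * η ^ 2 * σ ^ 2 ≤
      6 * t ^ 2 * η ^ 2 * (2 * σ ^ 2 + G ^ 2) := by
    have htt : t ≤ t ^ 2 := by nlinarith
    have hη2 : 0 ≤ η ^ 2 := sq_nonneg η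
    nlinarith [mul_le_mul_of_nonneg_right htt (mul_nonneg hη2 (sq_nonneg B)),
      mul_le_mul_of_nonneg_right htt (mul_nonneg hη2 (sq_nonneg σ)),
      mul_le_mul_of_nonneg_left hB (mul_nonneg (sq_nonneg t) hη2),
      mul_nonneg (mul_nonneg (sq_nonneg t) hη2) (sq_nonneg σ),
      mul_nonneg (mul_nonneg (sq_nonneg t) hη2) (sq_nonneg G)]
  rw [← mul_le_mul_iff_left₀ ht0]
  have hlhs : (1 + 2 / t) * A ^ 2 * t = (t + 2) * A ^ 2 := by field_simp
  nlinarith [mul_le_mul_of_nonneg_right hp (sq_nonneg A),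
    mul_le_mul_of_nonneg_right hp2 (sq_nonneg A)]

theorem stmt_5_general {E : Type*} [NormedAddCommGroup E] [InnerProductSpace ℝ E] [CompleteSpace E]
    {Ω : Type*} [MeasurableSpace Ω] (μ : Measure Ω) [IsProbabilityMeasure μ]
    (F : E → ℝ) (S : ℝ) (hS : 0 < S)
    (hlip : ∀ a b : E, ‖gradient F a - gradient F b‖ ≤ S * ‖a - b‖)
    (τ : ℕ) (hτ : 1 ≤ τ) (η : ℝ) (hη0 : 0 ≤ η) (hη : η ≤ 1 / (Real.sqrt 6 * S * τ))
    (x y : E) (g : Ω → E) (hg2 : MemLp g 2 μ)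
    (σ G : ℝ)
    (hmean : ∫ ω, g ω ∂μ = gradient F x)
    (hvar : ∫ ω, ‖g ω - gradient F x‖ ^ 2 ∂μ ≤ σ ^ 2)
    (hy : ‖gradient F y‖ ^ 2 ≤ σ ^ 2 + G ^ 2) :
    ∫ ω, ‖(x - η • g ω) - y‖ ^ 2 ∂μ ≤
      (1 + 2 / (τ : ℝ)) * ‖x - y‖ ^ 2 + 6 * τ * η ^ 2 * (2 * σ ^ 2 + G ^ 2) := by
  have hstep : 6 * (η * S * τ) ^ 2 ≤ 1 := by
    have hη' : η * (Real.sqrt 6 * S * τ) ≤ 1 := by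
      rwa [← le_div_iff₀ (by positivity)]
    calc 6 * (η * S * τ) ^ 2 = (η * (Real.sqrt 6 * S * τ)) ^ 2 := by
          linear_combination (η * S * τ) ^ 2 * (Real.sq_sqrt (show (0 : ℝ) ≤ 6 by norm_num)).symm
      _ ≤ 1 := pow_le_one₀ (by positivity) hη'
  simp_rw [sub_right_comm x _ y]
  rw [integral_norm_sub_smul_sq hg2, hmean]
  calc _ ≤ ‖(x - y) - η • gradient F x‖ ^ 2 + η ^ 2 * σ ^ 2 := by gcongr
    _ ≤ (1 + 2 * η * S + 2 * η ^ 2 * S ^ 2) * ‖x - y‖ ^ 2 + 2 * η * ‖x - y‖ * ‖gradient F y‖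
          + 2 * η ^ 2 * ‖gradient F y‖ ^ 2 + η ^ 2 * σ ^ 2 := by
        gcongr
        exact norm_sub_smul_sq_le hη0 (hlip x y)
    _ ≤ _ := sgd_step_scalar_bound (by exact_mod_cast hτ) hstep hy

/-- Single-step SGD recursion (proof of Lemma B.3). -/
theorem stmt_5 {E : Type*} [NormedAddCommGroup E] [InnerProductSpace ℝ E] [CompleteSpace E]
    {Ω : Type*} [MeasurableSpace Ω] (μ : Measure Ω) [IsProbabilityMeasure μ]
    (F : E → ℝ) (S : ℝ) (hS : 0 < S)
    (hdiff : Differentiable ℝ F)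
    (hlip : ∀ a b : E, ‖gradient F a - gradient F b‖ ≤ S * ‖a - b‖)
    (τ : ℕ) (hτ : 1 ≤ τ) (η : ℝ) (hη0 : 0 ≤ η) (hη : η ≤ 1 / (Real.sqrt 6 * S * τ))
    (x y : E) (g : Ω → E) (hg2 : MemLp g 2 μ)
    (σ G : ℝ)
    (hmean : ∫ ω, g ω ∂μ = gradient F x)
    (hvar : ∫ ω, ‖g ω - gradient F x‖ ^ 2 ∂μ ≤ σ ^ 2)
    (hy : ‖gradient F y‖ ^ 2 ≤ σ ^ 2 + G ^ 2) :
    ∫ ω, ‖(x - η • g ω) - y‖ ^ 2 ∂μ ≤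
      (1 + 2 / (τ : ℝ)) * ‖x - y‖ ^ 2 + 6 * τ * η ^ 2 * (2 * σ ^ 2 + G ^ 2) :=
  stmt_5_general μ F S hS hlip τ hτ η hη0 hη x y g hg2 σ G hmean hvar hy
end

section
/- Local SGD drift bound (Lemma B.3). In the local SGD model with τ steps, step size η and initial point x⁰, suppose S > 0, τ ≥ 1 and 0 ≤ η ≤ 1/(√6·S·τ). Then ∑_{i=0}^{τ−1} 𝔼[‖X_i − x⁰‖²] ≤ 12τ³η²·(2σ² + G²). -/
/-!
Each step moves the iterate by `η • g`, whose `L²` norm is at most `|η| G`, so by Minkowski's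
inequality `𝔼‖X_i - x⁰‖² ≤ (i η G)²`; summing over `i < τ` gives the bound.

The moment bounds are Bochner integrals, so `g a` need not be square integrable, and `E` need not
be separable, so the iterates need not be measurable. The argument therefore runs through the value
functions `V_k = T^k ‖· - x⁰‖²` with `T h b = ∫⁻ z, h (b - η • g b z) ∂ν`: each `V_k b` is `∞` or
at most `(‖b - x⁰‖ + k |η| G)²`, and `‖b - x⁰‖² ≤ 2^k (V_k b + k η² G²)`, which forces
`V_{k+1} b = ∞` whenever `g b ∉ L²`. When `‖X_k - x⁰‖²` is integrable, Tonelli identifies its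
integral with `V_k x⁰`; otherwise its Bochner integral is `0`.
-/

open MeasureTheory
open scoped ENNReal NNReal

section Trajectory

variable {α Z : Type*}

/-- When `N < k` only `N` steps are taken. -/
def trajectory (s : α → Z → α) : ℕ → α → {N : ℕ} → (Fin N → Z) → α
  | 0, b, _, _ => b
  | _ + 1, b, 0, _ => b
  | k + 1, b, _ + 1, y => trajectory s k (s b (y 0)) (Fin.tail y)

theorem trajectory_succ (s : α → Z → α) :
    ∀ (k : ℕ) (b : α) {N : ℕ} (y : Fin N → Z) (hk : k < N),
      trajectory s (k + 1) b y = s (trajectory s k b y) (y ⟨k, hk⟩)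
  | 0, b, N + 1, y, _ => rfl
  | k + 1, b, N + 1, y, hk => by
    rw [trajectory, trajectory, trajectory_succ s k _ (Fin.tail y) (by omega)]
    rfl

variable [MeasurableSpace Z] {ν : Measure Z}

/-- The transition operator of the random map `s`; as a lower integral it makes sense for
non-measurable `h`. -/
noncomputable def transitionOp (ν : Measure Z) (s : α → Z → α) (h : α → ℝ≥0∞) (b : α) : ℝ≥0∞ :=
  ∫⁻ z, h (s b z) ∂ν

variable [IsProbabilityMeasure ν]

theorem transitionOp_le_mul_add {s : α → Z → α} {h h' : α → ℝ≥0∞} {a c : ℝ≥0∞} (ha : a ≠ ∞)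
    (hle : ∀ x, h x ≤ a * (h' x + c)) (b : α) :
    transitionOp ν s h b ≤ a * (transitionOp ν s h' b + c) := by
  calc transitionOp ν s h b ≤ ∫⁻ z, a * (h' (s b z) + c) ∂ν := lintegral_mono fun z => hle _
    _ = _ := by
        rw [lintegral_const_mul' _ _ ha, lintegral_add_right' _ aemeasurable_const]
        simp [transitionOp]

theorem lintegral_comp_trajectory (s : α → Z → α) (h : α → ℝ≥0∞) :
    ∀ (k : ℕ) (b : α) {N : ℕ}, k ≤ N →
      AEMeasurable (fun y => h (trajectory s k b y)) (Measure.pi fun _ : Fin N => ν) →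
      ∫⁻ y, h (trajectory s k b y) ∂(Measure.pi fun _ : Fin N => ν) = (transitionOp ν s)^[k] h b
  | 0, b, N, _, _ => by simp [trajectory]
  | k + 1, b, N + 1, hk, hmeas => by
    set e := MeasurableEquiv.piFinSuccAbove (fun _ : Fin (N + 1) => Z) 0
    have he : MeasurePreserving e.symm (ν.prod (Measure.pi fun _ : Fin N => ν))
        (Measure.pi fun _ => ν) :=
      (measurePreserving_piFinSuccAbove (fun _ => ν) 0).symm e
    have hcons (z : Z) (r : Fin N → Z) : e.symm (z, r) = Fin.cons z r := by
      simp [e, MeasurableEquiv.piFinSuccAbove_symm_apply, Fin.insertNthEquiv, Fin.insertNth_zero']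
    have hprod := hmeas.comp_quasiMeasurePreserving he.quasiMeasurePreserving
    rw [← he.lintegral_comp_emb e.symm.measurableEmbedding,
      lintegral_prod (fun q => h (trajectory s (k + 1) b (e.symm q))) hprod,
      Function.iterate_succ_apply']
    refine lintegral_congr_ae ?_
    filter_upwards [hprod.aestronglyMeasurable.prodMk_left] with z hz
    simp only [Function.comp_apply, hcons, trajectory, Fin.cons_zero, Fin.tail_cons] at hz ⊢
    exact lintegral_comp_trajectory s h k (s b z) (by omega) hz.aemeasurable

end Trajectory

theorem ENNReal.sq_le_two_mul_of_le_add {x a b : ℝ≥0∞} (h : x ≤ a + b) :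
    x ^ 2 ≤ 2 * (a ^ 2 + b ^ 2) := by
  have := ENNReal.rpow_add_le_mul_rpow_add_rpow a b (p := 2) one_le_two
  norm_num at this
  exact (pow_le_pow_left' h 2).trans (mod_cast this)

theorem lintegral_add_sq_le {Z : Type*} [MeasurableSpace Z] {μ : Measure Z} {F G : Z → ℝ≥0∞}
    (hF : AEMeasurable F μ) (hG : AEMeasurable G μ) {a b : ℝ≥0∞}
    (hFa : ∫⁻ z, F z ^ 2 ∂μ ≤ a ^ 2) (hGb : ∫⁻ z, G z ^ 2 ∂μ ≤ b ^ 2) :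
    ∫⁻ z, (F z + G z) ^ 2 ∂μ ≤ (a + b) ^ 2 := by
  have hmk := ENNReal.lintegral_Lp_add_le hF hG one_le_two
  simp only [Pi.add_apply, ENNReal.rpow_two] at hmk
  have hsqrt {I c : ℝ≥0∞} (h : I ≤ c ^ 2) : I ^ (1 / 2 : ℝ) ≤ c := by
    calc I ^ (1 / 2 : ℝ) ≤ (c ^ 2) ^ (1 / 2 : ℝ) := ENNReal.rpow_le_rpow h (by norm_num)
      _ = c := by rw [← ENNReal.rpow_two, ← ENNReal.rpow_mul]; norm_num
  calc ∫⁻ z, (F z + G z) ^ 2 ∂μ = ((∫⁻ z, (F z + G z) ^ 2 ∂μ) ^ (1 / 2 : ℝ)) ^ 2 := by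
        rw [← ENNReal.rpow_two, ← ENNReal.rpow_mul]; norm_num
    _ ≤ (a + b) ^ 2 := pow_le_pow_left' (hmk.trans (add_le_add (hsqrt hFa) (hsqrt hGb))) 2

/-- `ψ` need not be measurable: compare a measurable minorant with the same integral to `γ`. -/
theorem lintegral_le_of_forall_le_or_eq_top {Z : Type*} [MeasurableSpace Z] {μ : Measure Z}
    {ψ γ : Z → ℝ≥0∞} (hγ : Measurable γ) (h : ∀ z, ψ z ≤ γ z ∨ ψ z = ∞)
    (hψ : ∫⁻ z, ψ z ∂μ ≠ ∞) : ∫⁻ z, ψ z ∂μ ≤ ∫⁻ z, γ z ∂μ := by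
  obtain ⟨φ, hφ, hφψ, hint⟩ := exists_measurable_le_lintegral_eq μ ψ
  set A := {z | γ z < φ z}
  have htop : (A.indicator fun _ => ∞) ≤ ψ := by
    intro z
    by_cases hz : z ∈ A
    · rw [Set.indicator_of_mem hz]
      exact ((h z).resolve_left (not_le.mpr (hz.trans_le (hφψ z)))).ge
    · simp [Set.indicator_of_notMem hz]
  have hA : μ A = 0 := by
    by_contra hA
    refine hψ (top_le_iff.mp ?_)
    calc ∞ = ∫⁻ z, A.indicator (fun _ => ∞) z ∂μ := by
          rw [lintegral_indicator_const (measurableSet_lt hγ hφ), ENNReal.top_mul hA]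
      _ ≤ ∫⁻ z, ψ z ∂μ := lintegral_mono htop
  rw [hint]
  exact lintegral_mono_ae (measure_eq_zero_iff_ae_notMem.mp hA |>.mono fun z hz => not_lt.mp hz)

section SecondMoment

variable {E Z : Type*} [NormedAddCommGroup E] [MeasurableSpace Z] {ν : Measure Z}

theorem enorm_norm_sq (v : E) : ‖‖v‖ ^ 2‖ₑ = ‖v‖ₑ ^ 2 := by
  rw [enorm_pow, enorm_norm]

theorem transitionOp_enorm_sub_sq (u : E → Z → E) (x₀ b : E) :
    transitionOp ν (fun b z => b - u b z) (fun b => ‖b - x₀‖ₑ ^ 2) b =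
      ∫⁻ z, ‖(b - x₀) - u b z‖ₑ ^ 2 ∂ν :=
  lintegral_congr fun z => by rw [sub_right_comm]

theorem lintegral_enorm_sq_ne_top_of_sub [IsFiniteMeasure ν] (d : E) {v : Z → E}
    (h : ∫⁻ z, ‖d - v z‖ₑ ^ 2 ∂ν ≠ ∞) : ∫⁻ z, ‖v z‖ₑ ^ 2 ∂ν ≠ ∞ := by
  refine ne_top_of_le_ne_top ?_ (lintegral_mono fun z =>
    ENNReal.sq_le_two_mul_of_le_add (by simpa using enorm_sub_le (a := d) (b := d - v z)))
  rw [lintegral_const_mul' _ _ (by norm_num), lintegral_add_left' aemeasurable_const]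
  simpa [ENNReal.mul_eq_top, ENNReal.add_eq_top] using h

variable [MeasurableSpace E] [OpensMeasurableSpace E]

theorem lintegral_enorm_sq_le_of_integral_norm_sq_le {w : Z → E} (hw : AEMeasurable w ν)
    {G : ℝ} (hG : ∫ z, ‖w z‖ ^ 2 ∂ν ≤ G ^ 2) (hfin : ∫⁻ z, ‖w z‖ₑ ^ 2 ∂ν ≠ ∞) :
    ∫⁻ z, ‖w z‖ₑ ^ 2 ∂ν ≤ ‖G‖ₑ ^ 2 := by
  have hint : Integrable (fun z => ‖w z‖ ^ 2) ν :=
    ⟨(hw.norm.pow_const 2).aestronglyMeasurable,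
      by simpa only [HasFiniteIntegral, enorm_norm_sq] using hfin.lt_top⟩
  calc ∫⁻ z, ‖w z‖ₑ ^ 2 ∂ν = ENNReal.ofReal (∫ z, ‖w z‖ ^ 2 ∂ν) := by
        rw [ofReal_integral_eq_lintegral_ofReal hint (ae_of_all _ fun _ => by positivity)]
        simp only [← enorm_norm_sq, Real.enorm_of_nonneg (sq_nonneg _)]
    _ ≤ ENNReal.ofReal (G ^ 2) := ENNReal.ofReal_le_ofReal hG
    _ = ‖G‖ₑ ^ 2 := by
        rw [← enorm_norm_sq G, Real.enorm_of_nonneg (sq_nonneg _), Real.norm_eq_abs, sq_abs]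

theorem lintegral_enorm_smul_sq_le [NormedSpace ℝ E] {w : Z → E} (hw : AEMeasurable w ν)
    {G : ℝ} (hG : ∫ z, ‖w z‖ ^ 2 ∂ν ≤ G ^ 2) (η : ℝ) (hfin : ∫⁻ z, ‖η • w z‖ₑ ^ 2 ∂ν ≠ ∞) :
    ∫⁻ z, ‖η • w z‖ₑ ^ 2 ∂ν ≤ (‖η‖₊ * ‖G‖₊ : ℝ≥0) ^ 2 := by
  rcases eq_or_ne η 0 with rfl | hη
  · simp
  simp only [enorm_smul, mul_pow] at hfin ⊢
  rw [lintegral_const_mul' _ _ (by simp)] at hfin ⊢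
  have hwfin : ∫⁻ z, ‖w z‖ₑ ^ 2 ∂ν ≠ ∞ := fun h => hfin (by simp [h, hη])
  rw [ENNReal.coe_mul, mul_pow, enorm_eq_nnnorm]
  gcongr
  exact lintegral_enorm_sq_le_of_integral_norm_sq_le hw hG hwfin

variable [IsProbabilityMeasure ν]

theorem enorm_sq_le_two_mul_lintegral (d : E) {v : Z → E} (hv : AEMeasurable v ν) :
    ‖d‖ₑ ^ 2 ≤ 2 * (∫⁻ z, ‖d - v z‖ₑ ^ 2 ∂ν + ∫⁻ z, ‖v z‖ₑ ^ 2 ∂ν) := by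
  calc ‖d‖ₑ ^ 2 = ∫⁻ _, ‖d‖ₑ ^ 2 ∂ν := by simp
    _ ≤ ∫⁻ z, 2 * (‖d - v z‖ₑ ^ 2 + ‖v z‖ₑ ^ 2) ∂ν := by
        refine lintegral_mono fun z => ?_
        exact ENNReal.sq_le_two_mul_of_le_add (by simpa using enorm_add_le (d - v z) (v z))
    _ = _ := by
        rw [lintegral_const_mul' _ _ (by norm_num), lintegral_add_right' _ (hv.enorm.pow_const 2)]

theorem lintegral_enorm_sub_add_sq_le (d : E) (c : ℝ≥0∞) {v : Z → E} (hv : AEMeasurable v ν)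
    {m : ℝ≥0∞} (hm : ∫⁻ z, ‖v z‖ₑ ^ 2 ∂ν ≤ m ^ 2) :
    ∫⁻ z, (‖d - v z‖ₑ + c) ^ 2 ∂ν ≤ (‖d‖ₑ + c + m) ^ 2 := by
  calc ∫⁻ z, (‖d - v z‖ₑ + c) ^ 2 ∂ν ≤ ∫⁻ z, ((‖d‖ₑ + c) + ‖v z‖ₑ) ^ 2 ∂ν := by
        refine lintegral_mono fun z => pow_le_pow_left' ?_ 2
        calc ‖d - v z‖ₑ + c ≤ ‖d‖ₑ + ‖v z‖ₑ + c := add_le_add_left enorm_sub_le c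
          _ = _ := add_right_comm _ _ _
    _ ≤ _ := lintegral_add_sq_le aemeasurable_const hv.enorm (by simp) hm

theorem enorm_sub_sq_le_iterate_transitionOp {u : E → Z → E} (hu : ∀ b, AEMeasurable (u b) ν)
    {m : ℝ≥0} (hmom : ∀ b, ∫⁻ z, ‖u b z‖ₑ ^ 2 ∂ν ≠ ∞ → ∫⁻ z, ‖u b z‖ₑ ^ 2 ∂ν ≤ m ^ 2)
    (x₀ : E) (k : ℕ) (b : E) :
    ‖b - x₀‖ₑ ^ 2 ≤ 2 ^ k * ((transitionOp ν fun b z => b - u b z)^[k]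
      (fun b => ‖b - x₀‖ₑ ^ 2) b + k * m ^ 2) := by
  induction k generalizing b with
  | zero => simp
  | succ k ih =>
    have hstep : ‖b - x₀‖ₑ ^ 2 ≤
        2 * (transitionOp ν (fun b z => b - u b z) (fun b => ‖b - x₀‖ₑ ^ 2) b + m ^ 2) := by
      rw [transitionOp_enorm_sub_sq]
      by_cases hfin : ∫⁻ z, ‖(b - x₀) - u b z‖ₑ ^ 2 ∂ν = ∞
      · simp [hfin]
      calc ‖b - x₀‖ₑ ^ 2
          ≤ 2 * (∫⁻ z, ‖(b - x₀) - u b z‖ₑ ^ 2 ∂ν + ∫⁻ z, ‖u b z‖ₑ ^ 2 ∂ν) :=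
            enorm_sq_le_two_mul_lintegral _ (hu b)
        _ ≤ _ := by gcongr; exact hmom b (lintegral_enorm_sq_ne_top_of_sub _ hfin)
    have hT := transitionOp_le_mul_add (ν := ν) (s := fun b z => b - u b z) (by simp) ih b
    set T := transitionOp ν fun b z => b - u b z
    rw [← Function.iterate_succ_apply' T] at hT
    set A := T^[k + 1] (fun b => ‖b - x₀‖ₑ ^ 2) b
    calc ‖b - x₀‖ₑ ^ 2 ≤ 2 * (2 ^ k * (A + k * m ^ 2) + m ^ 2) := hstep.trans (by gcongr)
      _ = 2 ^ (k + 1) * (A + k * m ^ 2) + 2 * m ^ 2 := by ring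
      _ ≤ 2 ^ (k + 1) * (A + k * m ^ 2) + 2 ^ (k + 1) * m ^ 2 := by
          gcongr; exact le_self_pow₀ one_le_two k.succ_ne_zero
      _ = 2 ^ (k + 1) * (A + (k + 1 : ℕ) * m ^ 2) := by push_cast; ring

theorem iterate_transitionOp_enorm_sub_sq_le {u : E → Z → E} (hu : ∀ b, Measurable (u b))
    {m : ℝ≥0} (hmom : ∀ b, ∫⁻ z, ‖u b z‖ₑ ^ 2 ∂ν ≠ ∞ → ∫⁻ z, ‖u b z‖ₑ ^ 2 ∂ν ≤ m ^ 2)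
    (x₀ : E) (k : ℕ) (b : E)
    (hfin : (transitionOp ν fun b z => b - u b z)^[k] (fun b => ‖b - x₀‖ₑ ^ 2) b ≠ ∞) :
    (transitionOp ν fun b z => b - u b z)^[k] (fun b => ‖b - x₀‖ₑ ^ 2) b ≤
      (‖b - x₀‖ₑ + k * m) ^ 2 := by
  induction k generalizing b with
  | zero => simp
  | succ k ih =>
    set T := transitionOp ν fun b z => b - u b z
    rw [Function.iterate_succ_apply'] at hfin ⊢
    have hub : ∫⁻ z, ‖u b z‖ₑ ^ 2 ∂ν ≤ m ^ 2 := by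
      refine hmom b (lintegral_enorm_sq_ne_top_of_sub (b - x₀) ?_)
      rw [← transitionOp_enorm_sub_sq]
      refine ne_top_of_le_ne_top ?_ (transitionOp_le_mul_add (by simp)
        (enorm_sub_sq_le_iterate_transitionOp (fun b => (hu b).aemeasurable) hmom x₀ k) b)
      exact ENNReal.mul_ne_top (by simp)
        (ENNReal.add_ne_top.mpr ⟨hfin, by simp [ENNReal.mul_ne_top]⟩)
    have hdich : ∀ z, T^[k] (fun b => ‖b - x₀‖ₑ ^ 2) (b - u b z) ≤
        (‖(b - x₀) - u b z‖ₑ + k * m) ^ 2 ∨ T^[k] (fun b => ‖b - x₀‖ₑ ^ 2) (b - u b z) = ∞ :=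
      fun z => by
        rw [← sub_right_comm]
        exact (em' _).imp_left (ih _)
    calc T (T^[k] fun b => ‖b - x₀‖ₑ ^ 2) b
        ≤ ∫⁻ z, (‖(b - x₀) - u b z‖ₑ + k * m) ^ 2 ∂ν :=
          lintegral_le_of_forall_le_or_eq_top
            ((by fun_prop : Continuous fun v : E => (‖(b - x₀) - v‖ₑ + k * m) ^ 2).measurable.comp
              (hu b)) hdich hfin
      _ ≤ (‖b - x₀‖ₑ + k * m + m) ^ 2 :=
          lintegral_enorm_sub_add_sq_le _ _ (hu b).aemeasurable hub
      _ = (‖b - x₀‖ₑ + (k + 1 : ℕ) * m) ^ 2 := by push_cast; ring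

theorem integral_norm_trajectory_sub_sq_le {u : E → Z → E} (hu : ∀ b, Measurable (u b))
    {m : ℝ≥0} (hmom : ∀ b, ∫⁻ z, ‖u b z‖ₑ ^ 2 ∂ν ≠ ∞ → ∫⁻ z, ‖u b z‖ₑ ^ 2 ∂ν ≤ m ^ 2)
    (x₀ : E) {N k : ℕ} (hk : k ≤ N) :
    ∫ y, ‖trajectory (fun b z => b - u b z) k x₀ y - x₀‖ ^ 2 ∂(Measure.pi fun _ : Fin N => ν) ≤
      (k * m) ^ 2 := by
  set P := Measure.pi fun _ : Fin N => ν
  set Y := trajectory (fun b z => b - u b z) k x₀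
  by_cases hint : Integrable (fun y => ‖Y y - x₀‖ ^ 2) P
  swap
  · rw [integral_undef hint]; positivity
  have hlin : ∫⁻ y, ‖Y y - x₀‖ₑ ^ 2 ∂P =
      (transitionOp ν fun b z => b - u b z)^[k] (fun b => ‖b - x₀‖ₑ ^ 2) x₀ :=
    lintegral_comp_trajectory (fun b z => b - u b z) (fun b => ‖b - x₀‖ₑ ^ 2) k x₀ hk
      (by simpa only [enorm_norm_sq] using hint.1.enorm)
  have hfin : ∫⁻ y, ‖Y y - x₀‖ₑ ^ 2 ∂P ≠ ∞ := by simpa only [enorm_norm_sq] using hint.2.ne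
  calc ∫ y, ‖Y y - x₀‖ ^ 2 ∂P = (∫⁻ y, ‖Y y - x₀‖ₑ ^ 2 ∂P).toReal := by
        rw [integral_eq_lintegral_of_nonneg_ae (ae_of_all _ fun _ => by positivity) hint.1]
        simp only [← enorm_norm_sq, Real.enorm_of_nonneg (sq_nonneg _)]
    _ ≤ (((k * m : ℝ≥0) : ℝ≥0∞) ^ 2).toReal := by
        refine ENNReal.toReal_mono (ENNReal.pow_ne_top ENNReal.coe_ne_top) ?_
        rw [hlin] at hfin ⊢
        simpa using iterate_transitionOp_enorm_sub_sq_le hu hmom x₀ k x₀ hfin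
    _ = (k * m) ^ 2 := by simp

end SecondMoment

theorem stmt_6_general {E : Type*} [NormedAddCommGroup E] [InnerProductSpace ℝ E]
    [MeasurableSpace E] [BorelSpace E]
    {Z : Type*} [MeasurableSpace Z] (ν : Measure Z) [IsProbabilityMeasure ν]
    (σ G : ℝ)
    (g : E → Z → E) (hgmeas : Measurable (Function.uncurry g))
    (hsecond : ∀ a : E, ∫ z, ‖g a z‖ ^ 2 ∂ν ≤ G ^ 2)
    (τ : ℕ) (η : ℝ)
    (x0 : E) (X : ℕ → (Fin τ → Z) → E)
    (hX0 : ∀ ω, X 0 ω = x0)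
    (hXrec : ∀ (i : ℕ) (hi : i < τ) (ω : Fin τ → Z),
      X (i + 1) ω = X i ω - η • g (X i ω) (ω ⟨i, hi⟩)) :
    ∑ i ∈ Finset.range τ,
        ∫ ω, ‖X i ω - x0‖ ^ 2 ∂(Measure.pi fun _ : Fin τ => ν) ≤
      12 * (τ : ℝ) ^ 3 * η ^ 2 * (2 * σ ^ 2 + G ^ 2) := by
  have hg (a : E) : Measurable (g a) := hgmeas.comp measurable_prodMk_left
  have hX : ∀ i ≤ τ, X i = trajectory (fun b z => b - η • g b z) i x0 := by
    intro i hi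
    induction i with
    | zero => funext ω; exact hX0 ω
    | succ i ih => funext ω; rw [hXrec i hi ω, trajectory_succ _ i x0 ω hi, ih (by omega)]
  have hterm : ∀ i ∈ Finset.range τ, ∫ ω, ‖X i ω - x0‖ ^ 2 ∂(Measure.pi fun _ : Fin τ => ν) ≤
      ((τ : ℝ) * (‖η‖ * ‖G‖)) ^ 2 := by
    intro i hi
    have hiτ := (Finset.mem_range.mp hi).le
    rw [hX i hiτ]
    refine (integral_norm_trajectory_sub_sq_le
      (fun b => (continuous_const_smul η).measurable.comp (hg b))
      (fun b => lintegral_enorm_smul_sq_le (hg b).aemeasurable (hsecond b) η) x0 hiτ).trans ?_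
    push_cast
    gcongr
  calc _ ≤ ∑ _i ∈ Finset.range τ, ((τ : ℝ) * (‖η‖ * ‖G‖)) ^ 2 := Finset.sum_le_sum hterm
    _ = (τ : ℝ) ^ 3 * η ^ 2 * G ^ 2 := by
        simp only [Finset.sum_const, Finset.card_range, nsmul_eq_mul, Real.norm_eq_abs]
        rw [mul_pow, mul_pow, sq_abs, sq_abs]; ring
    _ ≤ _ := by
        have : 0 ≤ (τ : ℝ) ^ 3 * η ^ 2 := by positivity
        nlinarith [mul_nonneg this (sq_nonneg σ), mul_nonneg this (sq_nonneg G)]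

/-- Local SGD drift bound (Lemma B.3). -/
theorem stmt_6 {E : Type*} [NormedAddCommGroup E] [InnerProductSpace ℝ E] [CompleteSpace E]
    [MeasurableSpace E] [BorelSpace E]
    {Z : Type*} [MeasurableSpace Z] (ν : Measure Z) [IsProbabilityMeasure ν]
    (F : E → ℝ) (S σ G : ℝ) (hS : 0 < S)
    (hdiff : Differentiable ℝ F)
    (hlip : ∀ a b : E, ‖gradient F a - gradient F b‖ ≤ S * ‖a - b‖)
    (g : E → Z → E) (hgmeas : Measurable (Function.uncurry g))
    (hmean : ∀ a : E, ∫ z, g a z ∂ν = gradient F a)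
    (hvar : ∀ a : E, ∫ z, ‖g a z - gradient F a‖ ^ 2 ∂ν ≤ σ ^ 2)
    (hsecond : ∀ a : E, ∫ z, ‖g a z‖ ^ 2 ∂ν ≤ G ^ 2)
    (τ : ℕ) (hτ : 1 ≤ τ) (η : ℝ) (hη0 : 0 ≤ η) (hη : η ≤ 1 / (Real.sqrt 6 * S * τ))
    (x0 : E) (X : ℕ → (Fin τ → Z) → E)
    (hX0 : ∀ ω, X 0 ω = x0)
    (hXrec : ∀ (i : ℕ) (hi : i < τ) (ω : Fin τ → Z),
      X (i + 1) ω = X i ω - η • g (X i ω) (ω ⟨i, hi⟩)) :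
    ∑ i ∈ Finset.range τ,
        ∫ ω, ‖X i ω - x0‖ ^ 2 ∂(Measure.pi fun _ : Fin τ => ν) ≤
      12 * (τ : ℝ) ^ 3 * η ^ 2 * (2 * σ ^ 2 + G ^ 2) :=
  stmt_6_general ν σ G g hgmeas hsecond τ η x0 X hX0 hXrec
end

section
/- Single-step SGD recursion under heterogeneity (established in the proof of Lemma B.4). Let E be a real Hilbert space, F : E → ℝ differentiable with S-Lipschitz gradient where S > 0, and f : E → ℝ differentiable with ‖∇F(a) − ∇f(a)‖ ≤ ε for all a ∈ E. Let τ ≥ 1 be an integer and 0 ≤ η ≤ 1/(√8·S·τ). Let x, y ∈ E and let g be an E-valued random variable on a probability space with 𝔼[g] = ∇F(x) and 𝔼[‖g − ∇F(x)‖²] ≤ σ². Then 𝔼[‖(x − η·g) − y‖²] ≤ (1 + 2/τ)·‖x − y‖² + 8τη²·(σ² + ε² + ‖∇f(y)‖²). -/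
/-!
Write `c = x - y` and `m = ∇F(x) = 𝔼[g]`. Since `g - m` has mean zero, the cross term vanishes and
`𝔼‖c - η g‖² = ‖c - η m‖² + η² 𝔼‖g - m‖²`. The bias is bounded through the Lipschitz and
heterogeneity bounds by `‖c - η m‖ ≤ (1 + ηS)‖c‖ + η(ε + ‖∇f(y)‖)`, and since `ηSτ ≤ 1/2`, Young's
inequality with weight `3τ` turns its square into `(1 + 2/τ)‖c‖² + 4τη²(ε + ‖∇f(y)‖)²`.
-/

open MeasureTheory
open scoped RealInnerProductSpace

section VarianceDecomposition

variable {E : Type*} [NormedAddCommGroup E] [InnerProductSpace ℝ E] [CompleteSpace E]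
  {Ω : Type*} [MeasurableSpace Ω] {μ : Measure Ω} [IsProbabilityMeasure μ] {X : Ω → E}

theorem integral_norm_sub_sq_eq (hX : MemLp X 2 μ) (c : E) :
    ∫ ω, ‖c - X ω‖ ^ 2 ∂μ = ‖c - ∫ ω, X ω ∂μ‖ ^ 2 + ∫ ω, ‖X ω - ∫ ω, X ω ∂μ‖ ^ 2 ∂μ := by
  set m := ∫ ω, X ω ∂μ
  have hXc : MemLp (fun ω => X ω - m) 2 μ := hX.sub (memLp_const m)
  have hXc_int : Integrable (fun ω => X ω - m) μ := hXc.integrable one_le_two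
  have hmean : ∫ ω, X ω - m ∂μ = 0 := by
    rw [integral_sub (hX.integrable one_le_two) (integrable_const m)]
    simp [m]
  have hinner : Integrable (fun ω => 2 * ⟪c - m, X ω - m⟫) μ :=
    (hXc_int.const_inner _).const_mul 2
  have hbias : Integrable (fun ω => ‖c - m‖ ^ 2 - 2 * ⟪c - m, X ω - m⟫) μ :=
    (integrable_const _).sub hinner
  calc ∫ ω, ‖c - X ω‖ ^ 2 ∂μ
      = ∫ ω, ‖c - m‖ ^ 2 - 2 * ⟪c - m, X ω - m⟫ + ‖X ω - m‖ ^ 2 ∂μ := by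
        refine integral_congr_ae (.of_forall fun ω => ?_)
        dsimp only
        rw [← norm_sub_sq_real, sub_sub_sub_cancel_right]
    _ = ‖c - m‖ ^ 2 + ∫ ω, ‖X ω - m‖ ^ 2 ∂μ := by
        rw [integral_add hbias (hXc.integrable_norm_pow two_ne_zero),
          integral_sub (integrable_const _) hinner, integral_const_mul, integral_inner hXc_int,
          hmean]
        simp

theorem integral_norm_sub_smul_sq_eq (hX : MemLp X 2 μ) (c : E) (η : ℝ) :
    ∫ ω, ‖c - η • X ω‖ ^ 2 ∂μ =
      ‖c - η • ∫ ω, X ω ∂μ‖ ^ 2 + η ^ 2 * ∫ ω, ‖X ω - ∫ ω, X ω ∂μ‖ ^ 2 ∂μ := by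
  rw [integral_norm_sub_sq_eq (X := fun ω => η • X ω) (hX.const_smul η) c, integral_smul,
    ← integral_const_mul]
  congr 2
  ext ω
  rw [← smul_sub, norm_smul, mul_pow, Real.norm_eq_abs, sq_abs]

end VarianceDecomposition

theorem one_add_mul_add_sq_le {A s t q : ℝ} (hs : 0 ≤ s) (ht : 1 ≤ t) (hst : s * t ≤ 1 / 2) :
    ((1 + s) * A + q) ^ 2 ≤ (1 + 2 / t) * A ^ 2 + 4 * t * q ^ 2 := by
  have ht0 : 0 < t := by linarith
  have young : ((1 + s) * A + q) ^ 2 ≤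
      (1 + 1 / (3 * t)) * (1 + s) ^ 2 * A ^ 2 + (1 + 3 * t) * q ^ 2 := by
    have gap : (1 + 1 / (3 * t)) * (1 + s) ^ 2 * A ^ 2 + (1 + 3 * t) * q ^ 2
        - ((1 + s) * A + q) ^ 2 = ((1 + s) * A - 3 * t * q) ^ 2 / (3 * t) := by
      field_simp
      ring
    have : 0 ≤ ((1 + s) * A - 3 * t * q) ^ 2 / (3 * t) := by positivity
    linarith
  have coeff : (1 + 1 / (3 * t)) * (1 + s) ^ 2 ≤ 1 + 2 / t := by
    set u := 1 / t with hu
    have hu0 : 0 < u := by positivity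
    have hu1 : u ≤ 1 := by rw [hu, div_le_one ht0]; exact ht
    have hsu : s ≤ u / 2 := by
      rw [hu, le_div_iff₀ two_pos, le_div_iff₀ ht0]
      linarith
    rw [show 1 / (3 * t) = u / 3 by rw [hu]; field_simp, show 2 / t = 2 * u by rw [hu]; ring]
    nlinarith [mul_le_mul hsu hsu hs (by positivity), mul_pos hu0 hu0]
  have hq : (1 + 3 * t) * q ^ 2 ≤ 4 * t * q ^ 2 := by gcongr; linarith
  linarith [mul_le_mul_of_nonneg_right coeff (sq_nonneg A)]

theorem mul_le_half_of_le_one_div_sqrt_eight {η a : ℝ} (ha : 0 < a) (hη : η ≤ 1 / (√8 * a)) :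
    η * a ≤ 1 / 2 := by
  have h2 : 2 ≤ √8 := by
    rw [show (8 : ℝ) = 2 ^ 2 * 2 by norm_num, Real.sqrt_mul (by positivity),
      Real.sqrt_sq zero_le_two]
    nlinarith [Real.one_lt_sqrt_two]
  rw [le_div_iff₀ (by positivity)] at hη
  nlinarith

theorem norm_sub_smul_gradient_le {E : Type*} [NormedAddCommGroup E] [InnerProductSpace ℝ E]
    [CompleteSpace E] {F f : E → ℝ} {S ε η : ℝ} (hη : 0 ≤ η) {x y : E}
    (hlip : ‖gradient F x - gradient F y‖ ≤ S * ‖x - y‖)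
    (hhet : ‖gradient F y - gradient f y‖ ≤ ε) :
    ‖(x - y) - η • gradient F x‖ ≤ (1 + η * S) * ‖x - y‖ + η * (ε + ‖gradient f y‖) := by
  have hgrad : ‖gradient F x‖ ≤ S * ‖x - y‖ + (ε + ‖gradient f y‖) :=
    calc ‖gradient F x‖
        = ‖(gradient F x - gradient F y) + (gradient F y - gradient f y) + gradient f y‖ := by
          simp only [sub_add_sub_cancel, sub_add_cancel]
      _ ≤ ‖gradient F x - gradient F y‖ + ‖gradient F y - gradient f y‖ + ‖gradient f y‖ :=
          norm_add₃_le
      _ ≤ S * ‖x - y‖ + (ε + ‖gradient f y‖) := by linarith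
  calc ‖(x - y) - η • gradient F x‖
      ≤ ‖x - y‖ + η * ‖gradient F x‖ :=
        (norm_sub_le _ _).trans_eq (by rw [norm_smul, Real.norm_of_nonneg hη])
    _ ≤ ‖x - y‖ + η * (S * ‖x - y‖ + (ε + ‖gradient f y‖)) := by gcongr
    _ = (1 + η * S) * ‖x - y‖ + η * (ε + ‖gradient f y‖) := by ring

theorem stmt_7_general {E : Type*} [NormedAddCommGroup E] [InnerProductSpace ℝ E] [CompleteSpace E]
    {Ω : Type*} [MeasurableSpace Ω] (μ : Measure Ω) [IsProbabilityMeasure μ]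
    (F f : E → ℝ) (S ε : ℝ) (hS : 0 < S)
    (hlip : ∀ a b : E, ‖gradient F a - gradient F b‖ ≤ S * ‖a - b‖)
    (hhet : ∀ a : E, ‖gradient F a - gradient f a‖ ≤ ε)
    (τ : ℕ) (hτ : 1 ≤ τ) (η : ℝ) (hη0 : 0 ≤ η) (hη : η ≤ 1 / (Real.sqrt 8 * S * τ))
    (x y : E) (g : Ω → E) (hg2 : MemLp g 2 μ)
    (σ : ℝ)
    (hmean : ∫ ω, g ω ∂μ = gradient F x)
    (hvar : ∫ ω, ‖g ω - gradient F x‖ ^ 2 ∂μ ≤ σ ^ 2) :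
    ∫ ω, ‖(x - η • g ω) - y‖ ^ 2 ∂μ ≤
      (1 + 2 / (τ : ℝ)) * ‖x - y‖ ^ 2 +
        8 * τ * η ^ 2 * (σ ^ 2 + ε ^ 2 + ‖gradient f y‖ ^ 2) := by
  have hτ1 : (1 : ℝ) ≤ τ := by exact_mod_cast hτ
  have hstep : η * S * τ ≤ 1 / 2 := by
    rw [mul_assoc]
    exact mul_le_half_of_le_one_div_sqrt_eight (by positivity) (by rwa [← mul_assoc])
  have hε : 0 ≤ ε := (norm_nonneg _).trans (hhet y)
  set A := ‖x - y‖
  set D := ‖gradient f y‖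
  calc ∫ ω, ‖(x - η • g ω) - y‖ ^ 2 ∂μ
      = ∫ ω, ‖(x - y) - η • g ω‖ ^ 2 ∂μ := by simp_rw [sub_right_comm]
    _ = ‖(x - y) - η • gradient F x‖ ^ 2 + η ^ 2 * ∫ ω, ‖g ω - gradient F x‖ ^ 2 ∂μ := by
        rw [integral_norm_sub_smul_sq_eq hg2, hmean]
    _ ≤ ((1 + η * S) * A + η * (ε + D)) ^ 2 + η ^ 2 * σ ^ 2 := by
        gcongr
        exact norm_sub_smul_gradient_le hη0 (hlip x y) (hhet y)
    _ ≤ (1 + 2 / (τ : ℝ)) * A ^ 2 + 4 * τ * (η * (ε + D)) ^ 2 + η ^ 2 * σ ^ 2 := by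
        gcongr
        exact one_add_mul_add_sq_le (by positivity) hτ1 hstep
    _ ≤ (1 + 2 / (τ : ℝ)) * A ^ 2 + 8 * τ * η ^ 2 * (σ ^ 2 + ε ^ 2 + D ^ 2) := by
        have hsum : 4 * τ * (η * (ε + D)) ^ 2 ≤ 8 * τ * η ^ 2 * (ε ^ 2 + D ^ 2) := by
          rw [mul_pow, show (8 : ℝ) * τ * η ^ 2 * (ε ^ 2 + D ^ 2) =
            4 * τ * (η ^ 2 * (2 * (ε ^ 2 + D ^ 2))) by ring]
          gcongr
          exact add_sq_le
        have hvar' : η ^ 2 * σ ^ 2 ≤ 8 * τ * η ^ 2 * σ ^ 2 := by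
          nlinarith [mul_nonneg (sq_nonneg η) (sq_nonneg σ)]
        linarith

/-- Single-step SGD recursion under heterogeneity (proof of Lemma B.4). -/
theorem stmt_7 {E : Type*} [NormedAddCommGroup E] [InnerProductSpace ℝ E] [CompleteSpace E]
    {Ω : Type*} [MeasurableSpace Ω] (μ : Measure Ω) [IsProbabilityMeasure μ]
    (F f : E → ℝ) (S ε : ℝ) (hS : 0 < S)
    (hFdiff : Differentiable ℝ F) (hfdiff : Differentiable ℝ f)
    (hlip : ∀ a b : E, ‖gradient F a - gradient F b‖ ≤ S * ‖a - b‖)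
    (hhet : ∀ a : E, ‖gradient F a - gradient f a‖ ≤ ε)
    (τ : ℕ) (hτ : 1 ≤ τ) (η : ℝ) (hη0 : 0 ≤ η) (hη : η ≤ 1 / (Real.sqrt 8 * S * τ))
    (x y : E) (g : Ω → E) (hg2 : MemLp g 2 μ)
    (σ : ℝ)
    (hmean : ∫ ω, g ω ∂μ = gradient F x)
    (hvar : ∫ ω, ‖g ω - gradient F x‖ ^ 2 ∂μ ≤ σ ^ 2) :
    ∫ ω, ‖(x - η • g ω) - y‖ ^ 2 ∂μ ≤
      (1 + 2 / (τ : ℝ)) * ‖x - y‖ ^ 2 +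
        8 * τ * η ^ 2 * (σ ^ 2 + ε ^ 2 + ‖gradient f y‖ ^ 2) :=
  stmt_7_general μ F f S ε hS hlip hhet τ hτ η hη0 hη x y g hg2 σ hmean hvar
end

section
/- Gradient accumulation bound (deterministic core of Lemma B.5). Let E be a real Hilbert space and F : E → ℝ differentiable with S-Lipschitz gradient, where S > 0. Let τ ≥ 1 be an integer, 0 ≤ η ≤ 1/(2Sτ), and define gradient-descent iterates X₀ = x⁰ and X_{i+1} = X_i − η·∇F(X_i) for 0 ≤ i < τ. Then ∑_{i=0}^{τ−1} ‖∇F(X_i) − ∇F(x⁰)‖² ≤ 8τ³η²S²·‖∇F(x⁰)‖². -/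
/-- Gradient accumulation bound (deterministic core of Lemma B.5). -/
theorem stmt_9 {E : Type*} [NormedAddCommGroup E] [InnerProductSpace ℝ E] [CompleteSpace E]
    (F : E → ℝ) (S : ℝ) (hS : 0 < S)
    (hdiff : Differentiable ℝ F)
    (hlip : ∀ a b : E, ‖gradient F a - gradient F b‖ ≤ S * ‖a - b‖)
    (τ : ℕ) (hτ : 1 ≤ τ) (η : ℝ) (hη0 : 0 ≤ η) (hη : η ≤ 1 / (2 * S * τ))
    (x0 : E) (X : ℕ → E)
    (hX0 : X 0 = x0)
    (hXrec : ∀ i : ℕ, i < τ → X (i + 1) = X i - η • gradient F (X i)) :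
    ∑ i ∈ Finset.range τ, ‖gradient F (X i) - gradient F x0‖ ^ 2 ≤
      8 * (τ : ℝ) ^ 3 * η ^ 2 * S ^ 2 * ‖gradient F x0‖ ^ 2 := by
  set G := ‖gradient F x0‖ with hGdef
  have hG0 : 0 ≤ G := norm_nonneg _
  have hτ0 : (0:ℝ) < (τ:ℝ) := by exact_mod_cast Nat.lt_of_lt_of_le Nat.zero_lt_one hτ
  have hSητ : S * η * (τ:ℝ) ≤ 1 / 2 := by
    have h2 : (0:ℝ) < 2 * S * τ := by positivity
    have := (le_div_iff₀ h2).mp hη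
    nlinarith
  have hdist : ∀ i, i ≤ τ → ‖X i - x0‖ ≤ 2 * η * i * G := by
    intro i
    induction i with
    | zero => intro _; simp [hX0]
    | succ i ih =>
      intro hi1
      have hiτ : i < τ := Nat.lt_of_succ_le hi1
      have hd := ih (Nat.le_of_lt hiτ)
      have hiR : (i:ℝ) ≤ (τ:ℝ) := by exact_mod_cast Nat.le_of_lt hiτ
      have h1 : ‖gradient F (X i) - gradient F x0‖ ≤ S * ‖X i - x0‖ := hlip _ _
      have h2 : ‖gradient F (X i)‖ - G ≤ ‖gradient F (X i) - gradient F x0‖ :=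
        norm_sub_norm_le _ _
      have key1 : S * η * (i:ℝ) * G ≤ S * η * (τ:ℝ) * G :=
        mul_le_mul_of_nonneg_right (mul_le_mul_of_nonneg_left hiR (by positivity)) hG0
      have key2 : S * η * (τ:ℝ) * G ≤ (1/2) * G := mul_le_mul_of_nonneg_right hSητ hG0
      have key3 : S * ‖X i - x0‖ ≤ S * (2 * η * (i:ℝ) * G) :=
        mul_le_mul_of_nonneg_left hd hS.le
      have hgrad : ‖gradient F (X i)‖ ≤ 2 * G := by nlinarith
      rw [hXrec i hiτ]
      have heq : X i - η • gradient F (X i) - x0 = (X i - x0) - η • gradient F (X i) := by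
        abel
      rw [heq]
      calc ‖(X i - x0) - η • gradient F (X i)‖
          ≤ ‖X i - x0‖ + ‖η • gradient F (X i)‖ := norm_sub_le _ _
        _ = ‖X i - x0‖ + η * ‖gradient F (X i)‖ := by
            rw [norm_smul, Real.norm_eq_abs, abs_of_nonneg hη0]
        _ ≤ 2 * η * ((i:ℝ) + 1) * G := by nlinarith
        _ = 2 * η * ((i+1 : ℕ):ℝ) * G := by push_cast; ring
  have hterm : ∀ i ∈ Finset.range τ,
      ‖gradient F (X i) - gradient F x0‖ ^ 2 ≤ 4 * (τ:ℝ)^2 * η^2 * S^2 * G^2 := by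
    intro i hi
    have hiτ : i < τ := Finset.mem_range.mp hi
    have hiR : (i:ℝ) ≤ (τ:ℝ) := by exact_mod_cast Nat.le_of_lt hiτ
    have h1 : ‖gradient F (X i) - gradient F x0‖ ≤ S * ‖X i - x0‖ := hlip _ _
    have hd := hdist i (Nat.le_of_lt hiτ)
    have key1 : S * η * (i:ℝ) * G ≤ S * η * (τ:ℝ) * G :=
      mul_le_mul_of_nonneg_right (mul_le_mul_of_nonneg_left hiR (by positivity)) hG0
    have key3 : S * ‖X i - x0‖ ≤ S * (2 * η * (i:ℝ) * G) :=
      mul_le_mul_of_nonneg_left hd hS.le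
    have hb : ‖gradient F (X i) - gradient F x0‖ ≤ 2 * S * η * (τ:ℝ) * G := by
      nlinarith
    have hnn : (0:ℝ) ≤ ‖gradient F (X i) - gradient F x0‖ := norm_nonneg _
    nlinarith
  calc ∑ i ∈ Finset.range τ, ‖gradient F (X i) - gradient F x0‖ ^ 2
      ≤ ∑ i ∈ Finset.range τ, 4 * (τ:ℝ)^2 * η^2 * S^2 * G^2 :=
        Finset.sum_le_sum hterm
    _ = (τ:ℝ) * (4 * (τ:ℝ)^2 * η^2 * S^2 * G^2) := by
        rw [Finset.sum_const, Finset.card_range, nsmul_eq_mul]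
    _ ≤ 8 * (τ:ℝ) ^ 3 * η ^ 2 * S ^ 2 * G ^ 2 := by nlinarith [mul_nonneg (pow_pos hτ0 3).le (mul_nonneg (mul_nonneg (sq_nonneg η) (sq_nonneg S)) (sq_nonneg G))]
end

section
/- Aggregated gradient-noise bound (step in the proof of Lemma C.1). In one round of parallel local SGD with N clients, τ steps, step size η ≥ 0 and common initial point x⁰, one has 𝔼[‖∑_{n=1}^N a_n ∑_{i=0}^{τ−1} (g_n(X_{n,i}, ω_{n,i}) − ∇F_n(X_{n,i}))‖²] ≤ N·τ²·∑_{n=1}^N a_n²·σ_n². No restriction on η beyond η ≥ 0 is needed. -/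
/-!
Overwriting a single sample cell `(n, s)` with a fresh independent draw `z` preserves the
product measure. After this substitution the aggregated noise of a run in which client `n` is
at step `s` and point `x` splits as `a n • (g n x z - ∇F n x)` plus the aggregated noise of the
run in which client `n` starts one step later from `x - η • g n x z`. By Minkowski's inequality
in `L²(ν n)`, each cell therefore moves the root mean square of the aggregated noise by at most
`|a n * σ n|`, so by induction on the number of remaining cells the root mean square of the
noise is at most `∑ n, |a n * σ n| * τ`; Cauchy–Schwarz then gives `N * τ² * ∑ n, a n² * σ n²`.
-/

open MeasureTheory

section L2

variable {Z : Type*} [MeasurableSpace Z] {ν : Measure Z}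

theorem norm_toLp_two_eq_sqrt_integral_sq {f : Z → ℝ} (hf : MemLp f 2 ν) :
    ‖hf.toLp f‖ = √(∫ z, f z ^ 2 ∂ν) := by
  rw [← Real.sqrt_sq (norm_nonneg _), ← real_inner_self_eq_norm_sq, L2.inner_def]
  congr 1
  refine integral_congr_ae ?_
  filter_upwards [hf.coeFn_toLp] with z hz
  simp [hz, sq]

theorem abs_sqrt_integral_sq_sub_le {f g h : Z → ℝ} (hf : MemLp f 2 ν) (hg : MemLp g 2 ν)
    (hh : MemLp h 2 ν) (hfg : ∀ᵐ z ∂ν, |f z - g z| ≤ h z) :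
    |√(∫ z, f z ^ 2 ∂ν) - √(∫ z, g z ^ 2 ∂ν)| ≤ √(∫ z, h z ^ 2 ∂ν) := by
  rw [← norm_toLp_two_eq_sqrt_integral_sq hf, ← norm_toLp_two_eq_sqrt_integral_sq hg,
    ← norm_toLp_two_eq_sqrt_integral_sq hh]
  refine (abs_norm_sub_norm_le _ _).trans ?_
  rw [← MemLp.toLp_sub]
  refine Lp.norm_le_norm_of_ae_le ?_
  filter_upwards [(hf.sub hg).coeFn_toLp, hh.coeFn_toLp, hfg] with z h1 h2 h3
  rw [h1, h2, Real.norm_eq_abs, Real.norm_eq_abs]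
  exact h3.trans (le_abs_self _)

end L2

section Update

variable {ι : Type*} [Fintype ι] [DecidableEq ι] {α : ι → Type*} [∀ i, MeasurableSpace (α i)]
  (μ : ∀ i, Measure (α i)) [∀ i, IsProbabilityMeasure (μ i)]

theorem measurePreserving_update (i : ι) :
    MeasurePreserving (fun p : α i × (∀ j, α j) => Function.update p.2 i p.1)
      ((μ i).prod (Measure.pi μ)) (Measure.pi μ) := by
  have hm : Measurable fun p : α i × (∀ j, α j) => Function.update p.2 i p.1 :=
    measurable_update'.comp measurable_swap
  refine ⟨hm, (Measure.pi_eq fun C hC => ?_).symm⟩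
  have hpre : (fun p : α i × (∀ j, α j) => Function.update p.2 i p.1) ⁻¹' Set.univ.pi C
      = C i ×ˢ Set.univ.pi (Function.update C i Set.univ) := by
    ext ⟨y, ω⟩
    simp only [Set.mem_preimage, Set.mem_pi, Set.mem_univ, forall_const, Set.mem_prod]
    constructor
    · intro h
      refine ⟨by simpa using h i, fun j => ?_⟩
      rcases eq_or_ne j i with rfl | hj
      · simp
      · simpa [hj] using h j
    · rintro ⟨hy, hω⟩ j
      rcases eq_or_ne j i with rfl | hj
      · simpa using hy
      · simpa [hj] using hω j
  rw [Measure.map_apply hm (MeasurableSet.univ_pi hC), hpre, Measure.prod_prod, Measure.pi_pi,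
    ← Finset.mul_prod_erase _ _ (Finset.mem_univ i),
    ← Finset.mul_prod_erase _ _ (Finset.mem_univ i)]
  simp only [Function.update_self, measure_univ, one_mul]
  congr 1
  refine Finset.prod_congr rfl fun j hj => ?_
  rw [Function.update_of_ne (Finset.ne_of_mem_erase hj)]

theorem measurePreserving_update_comp {Y : Type*} [MeasurableSpace Y] {ρ : Measure Y}
    [SFinite ρ] (i : ι) {T : Y × α i → α i}
    (hT : MeasurePreserving T (ρ.prod (μ i)) (μ i)) :
    MeasurePreserving (fun p : Y × (∀ j, α j) => Function.update p.2 i (T (p.1, p.2 i)))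
      (ρ.prod (Measure.pi μ)) (Measure.pi μ) := by
  have hU := measurePreserving_update μ i
  have hm : Measurable fun p : Y × (∀ j, α j) => Function.update p.2 i (T (p.1, p.2 i)) := by
    have := hT.measurable
    fun_prop
  have hcomp : MeasurePreserving
      ((fun p : Y × (∀ j, α j) => Function.update p.2 i (T (p.1, p.2 i)))
        ∘ Prod.map id fun q : α i × (∀ j, α j) => Function.update q.2 i q.1)
      (ρ.prod ((μ i).prod (Measure.pi μ))) (Measure.pi μ) := by
    convert hU.comp ((hT.prod (MeasurePreserving.id _)).comp
      (measurePreserving_prodAssoc ρ (μ i) (Measure.pi μ)).symm) using 1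
    funext ⟨z, y, ω⟩
    simp [MeasurableEquiv.prodAssoc]
  refine ⟨hm, ?_⟩
  rw [← ((MeasurePreserving.id ρ).prod hU).map_eq, Measure.map_map hm
    ((MeasurePreserving.id ρ).prod hU).measurable]
  exact hcomp.map_eq

end Update

section Perturbation

variable {Ω Z E : Type*} [MeasurableSpace Ω] [MeasurableSpace Z] [NormedAddCommGroup E]

/-- Phrased through every offset `v`, and only under integrability, rather than as a bound on
`eLpNorm W 2 μ`: in a non-separable `E` the noise need not be strongly measurable, and the
variance hypothesis is a Bochner integral, which says nothing where the integrand is not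
integrable. Integrability of the total reaches each single cell through the Fubini sections in
`IsL2PerturbationBound.prod_add`. -/
def IsL2PerturbationBound (μ : Measure Ω) (W : Ω → E) (β : ℝ) : Prop :=
  ∀ v : E, Integrable (fun ω => ‖v + W ω‖ ^ 2) μ → |√(∫ ω, ‖v + W ω‖ ^ 2 ∂μ) - ‖v‖| ≤ β

variable {μ : Measure Ω} {ν : Measure Z}

theorem isL2PerturbationBound_zero [IsProbabilityMeasure μ] {β : ℝ} (hβ : 0 ≤ β) :
    IsL2PerturbationBound μ (0 : Ω → E) β := fun v _ => by
  simpa [Real.sqrt_sq (norm_nonneg v)] using hβ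

theorem IsL2PerturbationBound.integral_norm_sq_le {W : Ω → E} {β : ℝ}
    (h : IsL2PerturbationBound μ W β) : ∫ ω, ‖W ω‖ ^ 2 ∂μ ≤ β ^ 2 := by
  by_cases hW : Integrable (fun ω => ‖W ω‖ ^ 2) μ
  · have hβ := h 0 (by simpa using hW)
    simp only [zero_add, norm_zero, sub_zero, abs_of_nonneg (Real.sqrt_nonneg _)] at hβ
    exact (Real.sqrt_le_iff.mp hβ).2
  · rw [integral_undef hW]
    positivity

theorem IsL2PerturbationBound.of_measurePreserving {Ω' : Type*} [MeasurableSpace Ω']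
    {μ' : Measure Ω'} {Φ : Ω' → Ω} (hΦ : MeasurePreserving Φ μ' μ) {W : Ω → E} {β : ℝ}
    (h : IsL2PerturbationBound μ' (W ∘ Φ) β) : IsL2PerturbationBound μ W β := by
  intro v hv
  have hcomp := (hΦ.integrable_comp hv.aestronglyMeasurable).mpr hv
  have := h v hcomp
  rwa [Function.comp_def, ← integral_map (f := fun ω => ‖v + W ω‖ ^ 2)
    hΦ.measurable.aemeasurable (hΦ.map_eq ▸ hv.aestronglyMeasurable), hΦ.map_eq] at this

variable [MeasurableSpace E] [OpensMeasurableSpace E] [IsProbabilityMeasure ν]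

theorem isL2PerturbationBound_of_integral_norm_sq_le {U : Z → E} (hU : Measurable U) {s : ℝ}
    (hs : ∫ z, ‖U z‖ ^ 2 ∂ν ≤ s ^ 2) : IsL2PerturbationBound ν U |s| := by
  intro v hv
  have hf : MemLp (fun z => ‖v + U z‖) 2 ν :=
    (memLp_two_iff_integrable_sq ((continuous_const.add continuous_id).norm.measurable.comp
      hU).aestronglyMeasurable).mpr hv
  have hg : MemLp (fun _ => ‖v‖) 2 ν := memLp_const _
  have hU2 : MemLp (fun z => ‖U z‖) 2 ν := by
    refine (hf.add hg).mono (hU.norm.aestronglyMeasurable) (ae_of_all _ fun z => ?_)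
    simp only [Real.norm_eq_abs, abs_norm, Pi.add_apply]
    calc ‖U z‖ = ‖(v + U z) - v‖ := by rw [add_sub_cancel_left]
      _ ≤ ‖v + U z‖ + ‖v‖ := norm_sub_le _ _
      _ ≤ _ := le_abs_self _
  have key := abs_sqrt_integral_sq_sub_le hf hg hU2 (ae_of_all _ fun z => by
    simpa using abs_norm_sub_norm_le (v + U z) v)
  simp only [integral_const, probReal_univ, one_smul, Real.sqrt_sq (norm_nonneg v)] at key
  exact key.trans ((Real.sqrt_le_sqrt hs).trans_eq (Real.sqrt_sq_eq_abs s))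

theorem IsL2PerturbationBound.prod_add [SFinite μ] {U : Z → E} (hUm : Measurable U) {s β : ℝ}
    (hU : IsL2PerturbationBound ν U s) {W : Z → Ω → E}
    (hW : ∀ z, IsL2PerturbationBound μ (W z) β) :
    IsL2PerturbationBound (ν.prod μ) (fun p => U p.1 + W p.1 p.2) (s + β) := by
  intro v hv
  set I : Z → ℝ := fun z => ∫ ω, ‖v + (U z + W z ω)‖ ^ 2 ∂μ
  have hI : Integrable I ν := hv.integral_prod_left
  have hI0 : ∀ z, 0 ≤ I z := fun z => integral_nonneg fun _ => by positivity
  have hclose : ∀ᵐ z ∂ν, |√(I z) - ‖v + U z‖| ≤ β := by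
    filter_upwards [hv.prod_right_ae] with z hz
    simpa only [add_assoc] using hW z (v + U z) (by simpa only [add_assoc] using hz)
  obtain ⟨z₀, hz₀⟩ := hclose.exists
  have hβ : 0 ≤ β := (abs_nonneg _).trans hz₀
  have hsqrt : MemLp (fun z => √(I z)) 2 ν :=
    (memLp_two_iff_integrable_sq (Real.continuous_sqrt.comp_aestronglyMeasurable
      hI.aestronglyMeasurable)).mpr (hI.congr (ae_of_all _ fun z => (Real.sq_sqrt (hI0 z)).symm))
  have hr : MemLp (fun z => ‖v + U z‖) 2 ν := by
    refine (hsqrt.add (memLp_const β)).mono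
      ((continuous_const.add continuous_id).norm.measurable.comp hUm).aestronglyMeasurable ?_
    filter_upwards [hclose] with z hz
    rw [Real.norm_eq_abs, abs_norm]
    exact (by linarith [(abs_sub_le_iff.mp hz).2] : ‖v + U z‖ ≤ √(I z) + β).trans (le_abs_self _)
  have hsections := abs_sqrt_integral_sq_sub_le hsqrt hr (memLp_const β) hclose
  simp only [integral_const, probReal_univ, one_smul, Real.sqrt_sq hβ,
    fun z => Real.sq_sqrt (hI0 z)] at hsections
  rw [integral_prod _ hv]
  calc |√(∫ z, I z ∂ν) - ‖v‖|
      ≤ |√(∫ z, I z ∂ν) - √(∫ z, ‖v + U z‖ ^ 2 ∂ν)| + |√(∫ z, ‖v + U z‖ ^ 2 ∂ν) - ‖v‖| :=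
        abs_sub_le _ _ _
    _ ≤ β + s := add_le_add hsections (hU v hr.integrable_sq)
    _ = s + β := add_comm _ _

end Perturbation

section LocalSGD

variable {Z E : Type*} [NormedAddCommGroup E] [NormedSpace ℝ E]

def tailNoise (g : E → Z → E) (D : E → E) (η : ℝ) {τ : ℕ} (y : Fin τ → Z) (s : ℕ) (x : E) : E :=
  if h : s < τ then
    (g x (y ⟨s, h⟩) - D x) + tailNoise g D η y (s + 1) (x - η • g x (y ⟨s, h⟩))
  else 0
termination_by τ - s

variable (g : E → Z → E) (D : E → E) (η : ℝ) {τ : ℕ}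

theorem tailNoise_of_le (y : Fin τ → Z) {s : ℕ} (hs : τ ≤ s) (x : E) :
    tailNoise g D η y s x = 0 := by
  rw [tailNoise, dif_neg (not_lt.mpr hs)]

theorem tailNoise_of_lt (y : Fin τ → Z) {s : ℕ} (hs : s < τ) (x : E) :
    tailNoise g D η y s x
      = (g x (y ⟨s, hs⟩) - D x) + tailNoise g D η y (s + 1) (x - η • g x (y ⟨s, hs⟩)) := by
  rw [tailNoise, dif_pos hs]

theorem tailNoise_update_of_lt (y : Fin τ → Z) (c : Fin τ) (z : Z) {s : ℕ}
    (hcs : c.1 < s) (x : E) :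
    tailNoise g D η (Function.update y c z) s x = tailNoise g D η y s x := by
  induction s, x using tailNoise.induct g η y with
  | case1 s x h ih =>
    have hne : (⟨s, h⟩ : Fin τ) ≠ c := fun h' => by simp [← h'] at hcs
    rw [tailNoise_of_lt _ _ _ _ h, tailNoise_of_lt _ _ _ _ h, Function.update_of_ne hne,
      ih (by omega)]
  | case2 s x h => rw [tailNoise_of_le _ _ _ _ (not_lt.mp h), tailNoise_of_le _ _ _ _ (not_lt.mp h)]

theorem tailNoise_update_self (y : Fin τ → Z) {s : ℕ} (hs : s < τ) (z : Z)
    (x : E) :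
    tailNoise g D η (Function.update y ⟨s, hs⟩ z) s x
      = (g x z - D x) + tailNoise g D η y (s + 1) (x - η • g x z) := by
  rw [tailNoise_of_lt _ _ _ _ hs, Function.update_self,
    tailNoise_update_of_lt g D η y _ z (Nat.lt_succ_self s)]

theorem sum_noise_eq_tailNoise (y : Fin τ → Z) (P : ℕ → E)
    (hP : ∀ i (hi : i < τ), P (i + 1) = P i - η • g (P i) (y ⟨i, hi⟩)) (s : ℕ) :
    ∑ i : Fin τ with s ≤ i.1, (g (P i) (y i) - D (P i)) = tailNoise g D η y s (P s) := by
  suffices ∀ x, P s = x →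
      ∑ i : Fin τ with s ≤ i.1, (g (P i) (y i) - D (P i)) = tailNoise g D η y s x from
    this _ rfl
  intro x hx
  induction s, x using tailNoise.induct g η y with
  | case1 s x h ih =>
    have hsplit : ({i | s ≤ i.1} : Finset (Fin τ))
        = insert ⟨s, h⟩ ({i | s + 1 ≤ i.1} : Finset (Fin τ)) := by
      ext i
      simp only [Finset.mem_filter, Finset.mem_univ, true_and, Finset.mem_insert, Fin.ext_iff]
      omega
    subst hx
    rw [hsplit, Finset.sum_insert (by simp), ih (hP s h), tailNoise_of_lt _ _ _ _ h]
  | case2 s x h =>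
    rw [tailNoise_of_le _ _ _ _ (not_lt.mp h)]
    exact Finset.sum_eq_zero fun i hi => absurd i.2 (by simp at hi; omega)

end LocalSGD

section Clients

variable {ι : Type*} [Fintype ι] [DecidableEq ι] {Z : ι → Type*} {E : Type*}
  [NormedAddCommGroup E] [NormedSpace ℝ E]
  (g : ∀ n, E → Z n → E) (D : ι → E → E) (a : ι → ℝ) (η : ℝ) {τ : ℕ}

def totalNoise (s : ι → ℕ) (x : ι → E) (ω : ∀ n, Fin τ → Z n) : E :=
  ∑ n, a n • tailNoise (g n) (D n) η (ω n) (s n) (x n)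

theorem totalNoise_update_update (s : ι → ℕ) (x : ι → E) (n₀ : ι) (hn₀ : s n₀ < τ) (z : Z n₀)
    (ω : ∀ n, Fin τ → Z n) :
    totalNoise g D a η s x (Function.update ω n₀ (Function.update (ω n₀) ⟨s n₀, hn₀⟩ z))
      = a n₀ • (g n₀ (x n₀) z - D n₀ (x n₀))
        + totalNoise g D a η (Function.update s n₀ (s n₀ + 1))
            (Function.update x n₀ (x n₀ - η • g n₀ (x n₀) z)) ω := by
  simp only [totalNoise]
  rw [← Finset.add_sum_erase _ _ (Finset.mem_univ n₀),
    ← Finset.add_sum_erase _ _ (Finset.mem_univ n₀)]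
  simp only [Function.update_self, tailNoise_update_self, smul_add, add_assoc]
  congr 2
  refine Finset.sum_congr rfl fun n hn => ?_
  simp only [Function.update_of_ne (Finset.ne_of_mem_erase hn)]

theorem sum_mul_sub_update_succ (c : ι → ℝ) (s : ι → ℕ) (n₀ : ι) (hn₀ : s n₀ < τ) :
    ∑ n, c n * ((τ - s n : ℕ) : ℝ)
      = c n₀ + ∑ n, c n * ((τ - Function.update s n₀ (s n₀ + 1) n : ℕ) : ℝ) := by
  rw [← Finset.add_sum_erase _ _ (Finset.mem_univ n₀),
    ← Finset.add_sum_erase _ _ (Finset.mem_univ n₀), Function.update_self, ← add_assoc]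
  congr 1
  · rw [show τ - s n₀ = τ - (s n₀ + 1) + 1 by omega]
    push_cast
    ring
  · refine Finset.sum_congr rfl fun n hn => ?_
    rw [Function.update_of_ne (Finset.ne_of_mem_erase hn)]

variable [MeasurableSpace E] [BorelSpace E] [∀ n, MeasurableSpace (Z n)] (ν : ∀ n, Measure (Z n))
  [∀ n, IsProbabilityMeasure (ν n)]

theorem isL2PerturbationBound_totalNoise (hg : ∀ n, Measurable (Function.uncurry (g n)))
    (σ : ι → ℝ) (hvar : ∀ n x, ∫ z, ‖g n x z - D n x‖ ^ 2 ∂ν n ≤ σ n ^ 2) (s : ι → ℕ)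
    (x : ι → E) :
    IsL2PerturbationBound (Measure.pi fun n => Measure.pi fun _ : Fin τ => ν n)
      (totalNoise g D a η s x) (∑ n, |a n * σ n| * ((τ - s n : ℕ) : ℝ)) := by
  by_cases hs : ∃ n₀, s n₀ < τ
  · obtain ⟨n₀, hn₀⟩ := hs
    have hU : Measurable fun z => a n₀ • (g n₀ (x n₀) z - D n₀ (x n₀)) :=
      ((continuous_sub_right _).const_smul (a n₀)).measurable.comp
        ((hg n₀).comp measurable_prodMk_left)
    have hUvar := isL2PerturbationBound_of_integral_norm_sq_le (ν := ν n₀) hU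
      (s := a n₀ * σ n₀) (by
        simp only [norm_smul, mul_pow, Real.norm_eq_abs, sq_abs, integral_const_mul]
        exact mul_le_mul_of_nonneg_left (hvar n₀ (x n₀)) (sq_nonneg _))
    refine IsL2PerturbationBound.of_measurePreserving (measurePreserving_update_comp _ n₀
      (measurePreserving_update (fun _ => ν n₀) ⟨s n₀, hn₀⟩)) ?_
    rw [sum_mul_sub_update_succ _ s n₀ hn₀]
    convert hUvar.prod_add hU fun z => isL2PerturbationBound_totalNoise hg σ hvar
      (Function.update s n₀ (s n₀ + 1)) (Function.update x n₀ (x n₀ - η • g n₀ (x n₀) z)) using 1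
    funext ⟨z, ω⟩
    exact totalNoise_update_update g D a η s x n₀ hn₀ z ω
  · simp only [not_exists, not_lt] at hs
    have hzero : totalNoise g D a η s x = (0 : (∀ n, Fin τ → Z n) → E) := by
      funext ω
      simp [totalNoise, tailNoise_of_le _ _ _ _ (hs _)]
    rw [hzero]
    exact isL2PerturbationBound_zero (by positivity)
termination_by ∑ n, (τ - s n)
decreasing_by
  refine Finset.sum_lt_sum (fun n _ => ?_) ⟨n₀, Finset.mem_univ _, ?_⟩
  · rcases eq_or_ne n n₀ with rfl | hn
    · simp; omega
    · simp [hn]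
  · simp; omega

end Clients

theorem stmt_10_general {E : Type*} [NormedAddCommGroup E] [InnerProductSpace ℝ E] [CompleteSpace E]
    [MeasurableSpace E] [BorelSpace E]
    (N : ℕ) {Z : Fin N → Type*} [∀ n, MeasurableSpace (Z n)]
    (ν : ∀ n, Measure (Z n)) [∀ n, IsProbabilityMeasure (ν n)]
    (F : Fin N → E → ℝ) (σ : Fin N → ℝ)
    (g : ∀ n, E → Z n → E) (hgmeas : ∀ n, Measurable (Function.uncurry (g n)))
    (hvar : ∀ n (a : E), ∫ z, ‖g n a z - gradient (F n) a‖ ^ 2 ∂(ν n) ≤ (σ n) ^ 2)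
    (a : Fin N → ℝ)
    (τ : ℕ) (η : ℝ)
    (x0 : E) (X : Fin N → ℕ → ((n : Fin N) → Fin τ → Z n) → E)
    (hX0 : ∀ n ω, X n 0 ω = x0)
    (hXrec : ∀ n (i : ℕ) (hi : i < τ) ω,
      X n (i + 1) ω = X n i ω - η • g n (X n i ω) (ω n ⟨i, hi⟩)) :
    ∫ ω, ‖∑ n, a n • ∑ i : Fin τ,
          (g n (X n i.1 ω) (ω n i) - gradient (F n) (X n i.1 ω))‖ ^ 2
        ∂(Measure.pi fun n => Measure.pi fun _ : Fin τ => ν n) ≤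
      N * (τ : ℝ) ^ 2 * ∑ n, (a n) ^ 2 * (σ n) ^ 2 := by
  have hnoise : ∀ ω, ∑ n, a n • ∑ i : Fin τ,
      (g n (X n i.1 ω) (ω n i) - gradient (F n) (X n i.1 ω))
        = totalNoise g (fun n => gradient (F n)) a η (fun _ => 0) (fun _ => x0) ω := by
    intro ω
    refine Finset.sum_congr rfl fun n _ => congrArg (a n • ·) ?_
    rw [← hX0 n ω, ← sum_noise_eq_tailNoise _ _ η (ω n) (X n · ω) (fun i hi => hXrec n i hi ω)]
    simp
  simp_rw [hnoise]
  refine (isL2PerturbationBound_totalNoise g _ a η ν hgmeas σ hvar _ _).integral_norm_sq_le.trans ?_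
  calc (∑ n, |a n * σ n| * ((τ - 0 : ℕ) : ℝ)) ^ 2
      ≤ N * ∑ n, (|a n * σ n| * τ) ^ 2 := by
        simpa using sq_sum_le_card_mul_sum_sq (s := Finset.univ) (f := fun n => |a n * σ n| * τ)
    _ = N * (τ : ℝ) ^ 2 * ∑ n, (a n) ^ 2 * (σ n) ^ 2 := by
      simp only [mul_pow, sq_abs, Finset.mul_sum]
      exact Finset.sum_congr rfl fun n _ => by ring

/-- Aggregated gradient-noise bound (step in the proof of Lemma C.1). -/
theorem stmt_10 {E : Type*} [NormedAddCommGroup E] [InnerProductSpace ℝ E] [CompleteSpace E]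
    [MeasurableSpace E] [BorelSpace E]
    (N : ℕ) {Z : Fin N → Type*} [∀ n, MeasurableSpace (Z n)]
    (ν : ∀ n, Measure (Z n)) [∀ n, IsProbabilityMeasure (ν n)]
    (F : Fin N → E → ℝ) (S : ℝ) (σ : Fin N → ℝ) (G : ℝ)
    (hdiff : ∀ n, Differentiable ℝ (F n))
    (hlip : ∀ n (a b : E), ‖gradient (F n) a - gradient (F n) b‖ ≤ S * ‖a - b‖)
    (g : ∀ n, E → Z n → E) (hgmeas : ∀ n, Measurable (Function.uncurry (g n)))
    (hmean : ∀ n (a : E), ∫ z, g n a z ∂(ν n) = gradient (F n) a)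
    (hvar : ∀ n (a : E), ∫ z, ‖g n a z - gradient (F n) a‖ ^ 2 ∂(ν n) ≤ (σ n) ^ 2)
    (hsecond : ∀ n (a : E), ∫ z, ‖g n a z‖ ^ 2 ∂(ν n) ≤ G ^ 2)
    (a : Fin N → ℝ) (ha : ∀ n, 0 ≤ a n) (hsum : ∑ n, a n = 1)
    (τ : ℕ) (η : ℝ) (hη : 0 ≤ η)
    (x0 : E) (X : Fin N → ℕ → ((n : Fin N) → Fin τ → Z n) → E)
    (hX0 : ∀ n ω, X n 0 ω = x0)
    (hXrec : ∀ n (i : ℕ) (hi : i < τ) ω,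
      X n (i + 1) ω = X n i ω - η • g n (X n i ω) (ω n ⟨i, hi⟩)) :
    ∫ ω, ‖∑ n, a n • ∑ i : Fin τ,
          (g n (X n i.1 ω) (ω n i) - gradient (F n) (X n i.1 ω))‖ ^ 2
        ∂(Measure.pi fun n => Measure.pi fun _ : Fin τ => ν n) ≤
      N * (τ : ℝ) ^ 2 * ∑ n, (a n) ^ 2 * (σ n) ^ 2 :=
  stmt_10_general N ν F σ g hgmeas hvar a τ η x0 X hX0 hXrec
end

section
/- Partial-participation variance bound (core of the bound (eq. server-strong-partial-1)). Let E be a real Hilbert space, W_1,…,W_N square-integrable E-valued random vectors, a_1,…,a_N ≥ 0 real weights, and I_1,…,I_N {0,1}-valued random variables with ℙ(I_n = 1) = q_n ∈ (0,1], such that the random vector (I_1,…,I_N) is independent of the random vector (W_1,…,W_N). Then 𝔼[‖∑_{n=1}^N (a_n I_n/q_n)·W_n − ∑_{n=1}^N a_n·W_n‖²] ≤ N·∑_{n=1}^N (a_n²/q_n)·𝔼[‖W_n‖²]. -/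
open MeasureTheory ProbabilityTheory

/-!
Writing the difference as `∑ (aₙ Iₙ / qₙ - aₙ) • Wₙ`, the triangle and Cauchy–Schwarz inequalities
bound its squared norm pointwise by `N ∑ (aₙ Iₙ / qₙ - aₙ)² ‖Wₙ‖²`. By independence each term has
expectation `𝔼[(aₙ Iₙ / qₙ - aₙ)²] 𝔼‖Wₙ‖²`, and since `Iₙ` is Bernoulli(`qₙ`) the first factor is
`aₙ² (1 / qₙ - 1) ≤ aₙ² / qₙ`.
-/

theorem norm_sum_sq_le_card_mul_sum_norm_sq {ι E : Type*} [SeminormedAddCommGroup E]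
    (s : Finset ι) (f : ι → E) :
    ‖∑ i ∈ s, f i‖ ^ 2 ≤ s.card * ∑ i ∈ s, ‖f i‖ ^ 2 :=
  (pow_le_pow_left₀ (norm_nonneg _) (norm_sum_le _ _) 2).trans sq_sum_le_card_mul_sum_sq

section ZeroOne

variable {Ω β : Type*} {I : Ω → ℝ}

theorem comp_eq_add_indicator_of_zero_or_one [AddCommGroup β] (hI01 : ∀ ω, I ω = 0 ∨ I ω = 1)
    (f : ℝ → β) :
    (fun ω => f (I ω)) = fun ω => f 0 + {ω | I ω = 1}.indicator (fun _ => f 1 - f 0) ω := by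
  funext ω
  rcases hI01 ω with h | h <;> simp [h]

variable [MeasurableSpace Ω] {μ : Measure Ω} (hI : Measurable I)
  (hI01 : ∀ ω, I ω = 0 ∨ I ω = 1) (f : ℝ → ℝ)
include hI hI01

theorem integrable_comp_of_zero_or_one [IsFiniteMeasure μ] : Integrable (fun ω => f (I ω)) μ := by
  rw [comp_eq_add_indicator_of_zero_or_one hI01]
  exact (integrable_const _).add ((integrable_const _).indicator (hI (measurableSet_singleton 1)))

theorem integral_comp_of_zero_or_one [IsProbabilityMeasure μ] :
    ∫ ω, f (I ω) ∂μ = (1 - μ.real {ω | I ω = 1}) * f 0 + μ.real {ω | I ω = 1} * f 1 := by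
  have hs : MeasurableSet {ω | I ω = 1} := hI (measurableSet_singleton 1)
  rw [comp_eq_add_indicator_of_zero_or_one hI01,
    integral_add (integrable_const _) ((integrable_const _).indicator hs),
    integral_const, integral_indicator_const _ hs]
  simp only [probReal_univ, smul_eq_mul]
  ring

end ZeroOne

theorem IndepFun.integral_comp_mul_norm_sq_of_zero_or_one {Ω E : Type*} [MeasurableSpace Ω]
    {μ : Measure Ω} [IsProbabilityMeasure μ] [NormedAddCommGroup E] [MeasurableSpace E]
    [OpensMeasurableSpace E] {I : Ω → ℝ} {W : Ω → E} (hI : Measurable I)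
    (hI01 : ∀ ω, I ω = 0 ∨ I ω = 1) (hW : MemLp W 2 μ) (hindep : IndepFun I W μ)
    {f : ℝ → ℝ} (hf : Measurable f) :
    Integrable (fun ω => f (I ω) * ‖W ω‖ ^ 2) μ ∧
      ∫ ω, f (I ω) * ‖W ω‖ ^ 2 ∂μ =
        ((1 - μ.real {ω | I ω = 1}) * f 0 + μ.real {ω | I ω = 1} * f 1) * ∫ ω, ‖W ω‖ ^ 2 ∂μ := by
  have hfW : IndepFun (fun ω => f (I ω)) (fun ω => ‖W ω‖ ^ 2) μ :=
    hindep.comp hf (measurable_norm.pow_const 2)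
  have hfI := integrable_comp_of_zero_or_one (μ := μ) hI hI01 f
  refine ⟨hfW.integrable_mul hfI hW.norm.integrable_sq, ?_⟩
  rw [hfW.integral_fun_mul_eq_mul_integral hfI.aestronglyMeasurable
    (hW.aestronglyMeasurable.norm.pow 2), integral_comp_of_zero_or_one hI hI01]

theorem variance_reweighted_bernoulli_le {q : ℝ} (hq : 0 < q) (a : ℝ) :
    (1 - q) * a ^ 2 + q * (a / q - a) ^ 2 ≤ a ^ 2 / q := by
  have hvar : (1 - q) * a ^ 2 + q * (a / q - a) ^ 2 = a ^ 2 / q - a ^ 2 := by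
    field_simp
    ring
  linarith [hvar, sq_nonneg a]

theorem stmt_13_general {E : Type*} [NormedAddCommGroup E] [InnerProductSpace ℝ E]
    [MeasurableSpace E] [BorelSpace E]
    {Ω : Type*} [MeasurableSpace Ω] (μ : Measure Ω) [IsProbabilityMeasure μ]
    (N : ℕ) (W : Fin N → Ω → E) (hW : ∀ n, MemLp (W n) 2 μ)
    (a : Fin N → ℝ)
    (I : Fin N → Ω → ℝ) (hImeas : ∀ n, Measurable (I n))
    (hI01 : ∀ n ω, I n ω = 0 ∨ I n ω = 1)
    (q : Fin N → ℝ) (hq : ∀ n, 0 < q n ∧ q n ≤ 1)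
    (hIq : ∀ n, μ {ω | I n ω = 1} = ENNReal.ofReal (q n))
    (hindep : IndepFun (fun ω => fun n => I n ω) (fun ω => fun n => W n ω) μ) :
    ∫ ω, ‖(∑ n, (a n * I n ω / q n) • W n ω) - ∑ n, a n • W n ω‖ ^ 2 ∂μ ≤
      N * ∑ n, (a n) ^ 2 / q n * ∫ ω, ‖W n ω‖ ^ 2 ∂μ := by
  have hsplit : ∀ ω, (∑ n, (a n * I n ω / q n) • W n ω) - ∑ n, a n • W n ω =
      ∑ n, (a n * I n ω / q n - a n) • W n ω := by
    simp only [← Finset.sum_sub_distrib, sub_smul, implies_true]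
  have hterm n := IndepFun.integral_comp_mul_norm_sq_of_zero_or_one (hImeas n) (hI01 n) (hW n)
    (hindep.comp (measurable_pi_apply n) (measurable_pi_apply n))
    (f := fun x => (a n * x / q n - a n) ^ 2) (by fun_prop)
  have hprob n : μ.real {ω | I n ω = 1} = q n := by
    rw [measureReal_def, hIq, ENNReal.toReal_ofReal (hq n).1.le]
  calc _ ≤ ∫ ω, (N : ℝ) * ∑ n, (a n * I n ω / q n - a n) ^ 2 * ‖W n ω‖ ^ 2 ∂μ := by
        refine integral_mono_of_nonneg (ae_of_all _ fun ω => sq_nonneg _)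
          ((integrable_finsetSum _ fun n _ => (hterm n).1).const_mul _) (ae_of_all _ fun ω => ?_)
        simpa [hsplit, norm_smul, mul_pow] using
          norm_sum_sq_le_card_mul_sum_norm_sq Finset.univ fun n => (a n * I n ω / q n - a n) • W n ω
    _ = N * ∑ n, ((1 - q n) * a n ^ 2 + q n * (a n / q n - a n) ^ 2) * ∫ ω, ‖W n ω‖ ^ 2 ∂μ := by
        rw [integral_const_mul, integral_finsetSum _ fun n _ => (hterm n).1]
        simp only [(hterm _).2, hprob, mul_zero, zero_div, zero_sub, neg_sq, mul_one]
    _ ≤ _ := by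
        gcongr with n
        exact variance_reweighted_bernoulli_le (hq n).1 (a n)

/-- Partial-participation variance bound (core of (eq. server-strong-partial-1)). -/
theorem stmt_13 {E : Type*} [NormedAddCommGroup E] [InnerProductSpace ℝ E] [CompleteSpace E]
    [MeasurableSpace E] [BorelSpace E]
    {Ω : Type*} [MeasurableSpace Ω] (μ : Measure Ω) [IsProbabilityMeasure μ]
    (N : ℕ) (W : Fin N → Ω → E) (hW : ∀ n, MemLp (W n) 2 μ)
    (a : Fin N → ℝ) (ha : ∀ n, 0 ≤ a n)
    (I : Fin N → Ω → ℝ) (hImeas : ∀ n, Measurable (I n))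
    (hI01 : ∀ n ω, I n ω = 0 ∨ I n ω = 1)
    (q : Fin N → ℝ) (hq : ∀ n, 0 < q n ∧ q n ≤ 1)
    (hIq : ∀ n, μ {ω | I n ω = 1} = ENNReal.ofReal (q n))
    (hindep : IndepFun (fun ω => fun n => I n ω) (fun ω => fun n => W n ω) μ) :
    ∫ ω, ‖(∑ n, (a n * I n ω / q n) • W n ω) - ∑ n, a n • W n ω‖ ^ 2 ∂μ ≤
      N * ∑ n, (a n) ^ 2 / q n * ∫ ω, ‖W n ω‖ ^ 2 ∂μ :=
  stmt_13_general μ N W hW a I hImeas hI01 q hq hIq hindep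
end

section
/- Decay lemma for the strongly convex rate (the induction argument used in all strongly convex convergence proofs of Sections C–F). Let γ ≥ 3 be a real number, C₁ ≥ 0 and C₂ ≥ 0 real constants, and let Δ : ℕ → ℝ satisfy Δ_t ≥ 0 for all t and Δ_{t+1} ≤ (1 − 2/(γ + t))·Δ_t + C₁/(γ + t)² + C₂/(γ + t)³ for every t ≥ 0. Then for every t ≥ 0, Δ_t ≤ v/(γ + t), where v = max{C₁ + C₂/(γ + 1), (γ + 1)·Δ₀}. -/
/-!
Induction on `t`. Since `v / (a + 1) - (1 - 2 / a) * (v / a) = v (a + 2) / (a² (a + 1))`, the bound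
`Δ ≤ v / a` propagates to `v / (a + 1)` as soon as `v a (a + 2) ≥ (C₁ a + C₂)(a + 1)`, which follows
from `v ≥ C₁ + C₂ / (γ + 1)` once `a ≥ γ + 1`, but not at `a = γ`. For that first step the sharper
start `Δ₀ ≤ v / (γ + 1)` built into `v` is used instead, and this is where `γ ≥ 3`
(in fact `(γ + 1)² ≤ 2γ²`) enters.
-/

lemma one_step_bound_mono {a x y C₁ C₂ : ℝ} (ha : 2 ≤ a) (hxy : x ≤ y) :
    (1 - 2 / a) * x + C₁ / a ^ 2 + C₂ / a ^ 3 ≤ (1 - 2 / a) * y + C₁ / a ^ 2 + C₂ / a ^ 3 := by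
  have hcoef : 0 ≤ 1 - 2 / a := by
    rw [sub_nonneg, div_le_one (by linarith)]
    exact ha
  gcongr

lemma one_step_bound_le {a b v C₁ C₂ : ℝ} (hb : 0 < b) (hba : b ≤ a)
    (hC₁ : 0 ≤ C₁) (hC₂ : 0 ≤ C₂) (hv : C₁ + C₂ / b ≤ v) :
    (1 - 2 / a) * (v / a) + C₁ / a ^ 2 + C₂ / a ^ 3 ≤ v / (a + 1) := by
  have ha : 0 < a := hb.trans_le hba
  have hC₂a : C₂ ≤ (v - C₁) * a := by
    rw [← div_le_iff₀ ha]
    calc C₂ / a ≤ C₂ / b := by gcongr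
      _ ≤ v - C₁ := by linarith
  have hid : v / (a + 1) - ((1 - 2 / a) * (v / a) + C₁ / a ^ 2 + C₂ / a ^ 3)
      = (v * a * (a + 2) - (C₁ * a + C₂) * (a + 1)) / (a ^ 3 * (a + 1)) := by
    field_simp
    ring
  rw [← sub_nonneg, hid]
  apply div_nonneg _ (by positivity)
  nlinarith [mul_nonneg hC₁ ha.le]

lemma first_step_bound_le {γ v C₁ C₂ : ℝ} (hγ : 3 ≤ γ)
    (hC₁ : 0 ≤ C₁) (hC₂ : 0 ≤ C₂) (hv : C₁ + C₂ / (γ + 1) ≤ v) :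
    (1 - 2 / γ) * (v / (γ + 1)) + C₁ / γ ^ 2 + C₂ / γ ^ 3 ≤ v / (γ + 1) := by
  have hγ0 : 0 < γ := by linarith
  have hC₂γ : C₂ ≤ (v - C₁) * (γ + 1) := by
    rw [← div_le_iff₀ (by linarith)]
    linarith
  have hid : v / (γ + 1) - ((1 - 2 / γ) * (v / (γ + 1)) + C₁ / γ ^ 2 + C₂ / γ ^ 3)
      = (2 * γ ^ 2 * v * (γ + 1) - (C₁ * γ + C₂) * (γ + 1) ^ 2) / (γ ^ 3 * (γ + 1) ^ 2) := by
    field_simp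
    ring
  rw [← sub_nonneg, hid]
  apply div_nonneg _ (by positivity)
  nlinarith [mul_le_mul_of_nonneg_left hC₂γ (by positivity : (0:ℝ) ≤ 2 * γ ^ 2),
    mul_nonneg (mul_nonneg hC₁ hγ0.le) (by nlinarith : (0:ℝ) ≤ (γ + 1) * (γ - 1)),
    mul_nonneg hC₂ (by nlinarith : (0:ℝ) ≤ 2 * γ ^ 2 - (γ + 1) ^ 2)]

theorem stmt_15_general (γ : ℝ) (hγ : 3 ≤ γ) (C₁ C₂ : ℝ) (hC₁ : 0 ≤ C₁) (hC₂ : 0 ≤ C₂)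
    (Δ : ℕ → ℝ)
    (hrec : ∀ t : ℕ,
      Δ (t + 1) ≤ (1 - 2 / (γ + t)) * Δ t + C₁ / (γ + t) ^ 2 + C₂ / (γ + t) ^ 3) :
    ∀ t : ℕ, Δ t ≤ max (C₁ + C₂ / (γ + 1)) ((γ + 1) * Δ 0) / (γ + t) := by
  set v := max (C₁ + C₂ / (γ + 1)) ((γ + 1) * Δ 0)
  have hv : C₁ + C₂ / (γ + 1) ≤ v := le_max_left _ _
  have h0 : Δ 0 ≤ v / (γ + 1) := by
    rw [le_div_iff₀ (by linarith), mul_comm]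
    exact le_max_right _ _
  have hsucc : ∀ t : ℕ, Δ (t + 1) ≤ v / (γ + t + 1) := by
    intro t
    induction t with
    | zero =>
      calc Δ (0 + 1) ≤ (1 - 2 / γ) * Δ 0 + C₁ / γ ^ 2 + C₂ / γ ^ 3 := by simpa using hrec 0
        _ ≤ (1 - 2 / γ) * (v / (γ + 1)) + C₁ / γ ^ 2 + C₂ / γ ^ 3 :=
          one_step_bound_mono (by linarith) h0
        _ ≤ v / (γ + 1) := first_step_bound_le hγ hC₁ hC₂ hv
        _ = v / (γ + (0 : ℕ) + 1) := by simp
    | succ t ih =>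
      have ha : γ + 1 ≤ γ + (t + 1 : ℕ) := by push_cast; linarith [t.cast_nonneg (α := ℝ)]
      have ih' : Δ (t + 1) ≤ v / (γ + (t + 1 : ℕ)) := by push_cast; rwa [← add_assoc]
      exact (hrec (t + 1)).trans <| (one_step_bound_mono (by linarith) ih').trans <|
        one_step_bound_le (by linarith) ha hC₁ hC₂ hv
  intro t
  cases t with
  | zero =>
    have hv0 : 0 ≤ v := le_trans (by positivity) hv
    calc Δ 0 ≤ v / (γ + 1) := h0
      _ ≤ v / (γ + (0 : ℕ)) := by gcongr; simp
  | succ t => simpa [add_assoc] using hsucc t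

/-- Decay lemma for the strongly convex rate. -/
theorem stmt_15 (γ : ℝ) (hγ : 3 ≤ γ) (C₁ C₂ : ℝ) (hC₁ : 0 ≤ C₁) (hC₂ : 0 ≤ C₂)
    (Δ : ℕ → ℝ) (hΔ : ∀ t, 0 ≤ Δ t)
    (hrec : ∀ t : ℕ,
      Δ (t + 1) ≤ (1 - 2 / (γ + t)) * Δ t + C₁ / (γ + t) ^ 2 + C₂ / (γ + t) ^ 3) :
    ∀ t : ℕ, Δ t ≤ max (C₁ + C₂ / (γ + 1)) ((γ + 1) * Δ 0) / (γ + t) :=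
  stmt_15_general γ hγ C₁ C₂ hC₁ hC₂ Δ hrec
end
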